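/- arXiv:2401.06487 — 3 statements merged into one kernel-verified Lean document; each statement's English description precedes it below -/
import Mathlib

section
/- (Csorba reduction) Let H be a finite simple graph and [u,v] an edge of H, and let G be the graph obtained from H by replacing the edge [u,v] by a path of length 4 (i.e., deleting the edge and joining u to v through three new vertices of degree 2). Then the independence complex I(G) is homotopy equivalent to the suspension Σ I(H). -/
open scoped Classical

noncomputable section

/-- An abstract simplicial complex on a vertex type `V`, given by a downward closed
collection of finite subsets of `V` (the simplices). -/
structure ACx (V : Type) where
  faces : Set (Finset V)
  down_closed : ∀ ⦃s t : Finset V⦄, s ∈ faces → t ⊆ s → t ∈ faces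

/-- The independence complex `I(G)` of a simple graph `G`: its simplices are the
independent sets of vertices of `G`. -/
def indepCx {V : Type} (G : SimpleGraph V) : ACx V where
  faces := {s | ∀ v ∈ s, ∀ w ∈ s, ¬ G.Adj v w}
  down_closed := fun _s _t hs hts v hv w hw => hs v (hts hv) w (hts hw)

/-- The support of a function `f : V → ℝ`, as a finset. -/
def suppF {V : Type} [Fintype V] (f : V → ℝ) : Finset V :=
  Finset.univ.filter fun v => f v ≠ 0

/-- The geometric realization of an abstract simplicial complex, as the set of
convex-combination (barycentric coordinate) functions supported on a simplex. -/
def ACx.geomSet {V : Type} [Fintype V] (K : ACx V) : Set (V → ℝ) :=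
  {f | (∀ v, 0 ≤ f v) ∧ (∑ v, f v) = 1 ∧ suppF f ∈ K.faces}

/-- The geometric realization of an abstract simplicial complex, as a topological space
(a subspace of `ℝ^V`). -/
def ACx.geom {V : Type} [Fintype V] (K : ACx V) : Type := K.geomSet

instance {V : Type} [Fintype V] (K : ACx V) : TopologicalSpace K.geom :=
  inferInstanceAs (TopologicalSpace ↥(K.geomSet))

/-- A model for the sphere S^{n-1}: the unit sphere in ℝ^n.  In particular `sph 0` is
the empty space S^{-1}, and `sph (k)` is the (k-1)-dimensional sphere. -/
def sph (n : ℕ) : Type := Metric.sphere (0 : EuclideanSpace ℝ (Fin n)) 1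

instance (n : ℕ) : TopologicalSpace (sph n) :=
  inferInstanceAs (TopologicalSpace ↥(Metric.sphere (0 : EuclideanSpace ℝ (Fin n)) 1))

/-- A base point of the sphere `sph n` (for `n > 0`). -/
def sphPt (n : ℕ) (h : 0 < n) : sph n :=
  ⟨EuclideanSpace.single (⟨0, h⟩ : Fin n) (1 : ℝ), by
    simp [EuclideanSpace.norm_single]⟩

/-- Wedge (one point union) of two pointed topological spaces. -/
def Wedge {X Y : Type} [TopologicalSpace X] [TopologicalSpace Y] (x₀ : X) (y₀ : Y) : Type :=
  Quot fun a b : X ⊕ Y => a = Sum.inl x₀ ∧ b = Sum.inr y₀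

instance {X Y : Type} [TopologicalSpace X] [TopologicalSpace Y] (x₀ : X) (y₀ : Y) :
    TopologicalSpace (Wedge x₀ y₀) :=
  inferInstanceAs (TopologicalSpace (Quot _))

/-- The join `K * L` of two abstract simplicial complexes, on the disjoint union of the
vertex sets; its simplices are the (disjoint) unions of a simplex of `K` and a simplex of `L`. -/
def joinCx {V W : Type} (K : ACx V) (L : ACx W) : ACx (V ⊕ W) where
  faces := {s | s.toLeft ∈ K.faces ∧ s.toRight ∈ L.faces}
  down_closed := fun _s _t hs hts =>
    ⟨K.down_closed hs.1 (fun a ha => Finset.mem_toLeft.2 (hts (Finset.mem_toLeft.1 ha))),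
     L.down_closed hs.2 (fun a ha => Finset.mem_toRight.2 (hts (Finset.mem_toRight.1 ha)))⟩

/-- The complex `S^0` consisting of two disjoint points. -/
def twoPtCx : ACx Bool where
  faces := {s | s.card ≤ 1}
  down_closed := fun _s _t hs hts => le_trans (Finset.card_le_card hts) hs

/-- The suspension `Σ K = K * S^0` of an abstract simplicial complex. -/
def suspCx {V : Type} (K : ACx V) : ACx (V ⊕ Bool) := joinCx K twoPtCx

/-- The point of the geometric realization corresponding to a vertex `w`. -/
def vertexPoint {V : Type} [Fintype V] (K : ACx V) (w : V) (h : ({w} : Finset V) ∈ K.faces) :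
    K.geom :=
  ⟨fun v => if v = w then 1 else 0,
    fun v => by dsimp only; split <;> norm_num,
    by simp,
    by
      have hs : suppF (fun v : V => if v = w then (1 : ℝ) else 0) = {w} := by
        ext v
        by_cases hv : v = w <;> simp [suppF, hv]
      rw [hs]; exact h⟩

/-- The empty set is a simplex of any independence complex. -/
theorem indepCx_empty_mem {V : Type} (G : SimpleGraph V) : (∅ : Finset V) ∈ (indepCx G).faces :=
  fun v hv => absurd hv (Finset.notMem_empty v)

/-- A singleton is always a simplex of the independence complex. -/
theorem indepCx_singleton_mem {V : Type} (G : SimpleGraph V) (w : V) :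
    ({w} : Finset V) ∈ (indepCx G).faces := by
  intro a ha b hb
  rw [Finset.mem_singleton] at ha hb
  subst ha; subst hb
  exact G.loopless.irrefl _

/-- A canonical point of the realization of a suspension: the north pole. -/
def northPole {V : Type} [Fintype V] (K : ACx V) (h : (∅ : Finset V) ∈ K.faces) :
    (suspCx K).geom :=
  vertexPoint (suspCx K) (Sum.inr true)
    ⟨by
      have ht : ({Sum.inr true} : Finset (V ⊕ Bool)).toLeft = ∅ := by
        ext a; simp
      rw [ht]; exact h,
     by
      have ht : ({Sum.inr true} : Finset (V ⊕ Bool)).toRight = {true} := by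
        ext a; simp
      rw [ht]
      show ({true} : Finset Bool).card ≤ 1
      simp⟩


/-- The graph obtained from `H` by replacing the edge `[u,v]` by a path of length 4:
the edge `u v` is deleted and `u` is joined to `v` through three new vertices of degree 2. -/
def edgeToPath4 {V : Type} (H : SimpleGraph V) (u v : V) : SimpleGraph (V ⊕ Fin 3) :=
  SimpleGraph.fromRel fun a b =>
    (∃ x y : V, a = Sum.inl x ∧ b = Sum.inl y ∧ H.Adj x y ∧
      ¬(x = u ∧ y = v) ∧ ¬(x = v ∧ y = u)) ∨
    (a = Sum.inl u ∧ b = Sum.inr 0) ∨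
    (a = Sum.inr 0 ∧ b = Sum.inr 1) ∨
    (a = Sum.inr 1 ∧ b = Sum.inr 2) ∨
    (a = Sum.inr 2 ∧ b = Sum.inl v)

namespace CsorbaAux

variable {V : Type}

lemma adj_ll (H : SimpleGraph V) (u v : V) (x y : V) :
    (edgeToPath4 H u v).Adj (Sum.inl x) (Sum.inl y) ↔
      H.Adj x y ∧ ¬(x = u ∧ y = v) ∧ ¬(x = v ∧ y = u) := by
  simp only [edgeToPath4, SimpleGraph.fromRel_adj]
  constructor
  · rintro ⟨hne, h | h⟩ <;>
      rcases h with ⟨x', y', hx, hy, hadj, h1, h2⟩ | ⟨h1,h2⟩ | ⟨h1,h2⟩ | ⟨h1,h2⟩ | ⟨h1,h2⟩ <;>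
      first
        | (cases hx; cases hy; exact ⟨hadj, h1, h2⟩)
        | (cases hx; cases hy;
           exact ⟨hadj.symm, fun ⟨hb,ha⟩ => h2 ⟨ha,hb⟩, fun ⟨hb,ha⟩ => h1 ⟨ha,hb⟩⟩)
        | simp_all
  · rintro ⟨hadj, h1, h2⟩
    refine ⟨by simpa using hadj.ne, Or.inl (Or.inl ⟨x, y, rfl, rfl, hadj, h1, h2⟩)⟩

lemma adj_lr (H : SimpleGraph V) (u v : V) (x : V) (i : Fin 3) :
    (edgeToPath4 H u v).Adj (Sum.inl x) (Sum.inr i) ↔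
      (x = u ∧ i = 0) ∨ (x = v ∧ i = 2) := by
  simp only [edgeToPath4, SimpleGraph.fromRel_adj]
  constructor
  · rintro ⟨hne, h | h⟩ <;>
      rcases h with ⟨x', y', hx, hy, hadj, h1, h2⟩ | ⟨h1,h2⟩ | ⟨h1,h2⟩ | ⟨h1,h2⟩ | ⟨h1,h2⟩ <;>
      simp_all
  · rintro (⟨rfl, rfl⟩ | ⟨rfl, rfl⟩)
    · exact ⟨by simp, Or.inl (Or.inr (Or.inl ⟨rfl, rfl⟩))⟩
    · exact ⟨by simp, Or.inr (Or.inr (Or.inr (Or.inr (Or.inr ⟨rfl, rfl⟩))))⟩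

lemma adj_rr (H : SimpleGraph V) (u v : V) (i j : Fin 3) :
    (edgeToPath4 H u v).Adj (Sum.inr i) (Sum.inr j) ↔
      (i = 0 ∧ j = 1) ∨ (i = 1 ∧ j = 0) ∨ (i = 1 ∧ j = 2) ∨ (i = 2 ∧ j = 1) := by
  simp only [edgeToPath4, SimpleGraph.fromRel_adj]
  constructor
  · rintro ⟨hne, h | h⟩ <;>
      rcases h with ⟨x', y', hx, hy, hadj, h1, h2⟩ | ⟨h1,h2⟩ | ⟨h1,h2⟩ | ⟨h1,h2⟩ | ⟨h1,h2⟩ <;>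
      simp_all
  · rintro (⟨rfl, rfl⟩ | ⟨rfl, rfl⟩ | ⟨rfl, rfl⟩ | ⟨rfl, rfl⟩) <;>
      refine ⟨by simp, ?_⟩
    · exact Or.inl (Or.inr (Or.inr (Or.inl ⟨rfl, rfl⟩)))
    · exact Or.inr (Or.inr (Or.inr (Or.inl ⟨rfl, rfl⟩)))
    · exact Or.inl (Or.inr (Or.inr (Or.inr (Or.inl ⟨rfl, rfl⟩))))
    · exact Or.inr (Or.inr (Or.inr (Or.inr (Or.inl ⟨rfl, rfl⟩))))


@[simp] lemma mem_suppF {W : Type} [Fintype W] {f : W → ℝ} {p : W} :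
    p ∈ suppF f ↔ f p ≠ 0 := by simp [suppF]

def upd2 (g : V → ℝ) (u v : V) (au av : ℝ) : V → ℝ :=
  fun x => if x = u then au else if x = v then av else g x

lemma upd2_u {g : V → ℝ} {u v : V} {au av : ℝ} : upd2 g u v au av u = au := by simp [upd2]

lemma upd2_v {g : V → ℝ} {u v : V} {au av : ℝ} (h : u ≠ v) : upd2 g u v au av v = av := by
  simp [upd2, h.symm]

lemma upd2_other {g : V → ℝ} {u v : V} {au av : ℝ} {x : V} (h1 : x ≠ u) (h2 : x ≠ v) :
    upd2 g u v au av x = g x := by simp [upd2, h1, h2]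

lemma sum_upd2 [Fintype V] (g : V → ℝ) (u v : V) (au av : ℝ) (huv : u ≠ v) :
    ∑ x, upd2 g u v au av x = au + av + ((∑ x, g x) - g u - g v) := by
  have hpt : ∀ x, upd2 g u v au av x =
      ((if x = u then au - g u else 0) + ((if x = v then av - g v else 0) + g x)) := by
    intro x
    by_cases hx : x = u
    · subst hx; simp [upd2, huv]
    · by_cases hx' : x = v
      · subst hx'; simp [upd2, hx]
      · simp [upd2, hx, hx']
  rw [Finset.sum_congr rfl fun x _ => hpt x]
  rw [Finset.sum_add_distrib, Finset.sum_add_distrib]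
  simp [Finset.sum_ite_eq']
  ring

def mkX (g : V → ℝ) (A B C : ℝ) : V ⊕ Fin 3 → ℝ :=
  Sum.elim g (fun i => if i = 0 then A else if i = 1 then B else C)

@[simp] lemma mkX_inl {g : V → ℝ} {A B C : ℝ} {x : V} : mkX g A B C (Sum.inl x) = g x := rfl
@[simp] lemma mkX_inr0 {g : V → ℝ} {A B C : ℝ} : mkX g A B C (Sum.inr 0) = A := by
  simp [mkX]
@[simp] lemma mkX_inr1 {g : V → ℝ} {A B C : ℝ} : mkX g A B C (Sum.inr 1) = B := by
  norm_num [mkX]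
@[simp] lemma mkX_inr2 {g : V → ℝ} {A B C : ℝ} : mkX g A B C (Sum.inr 2) = C := by
  simp [mkX, show (2:Fin 3) ≠ 0 by decide, show (2:Fin 3) ≠ 1 by decide]

def mkY (g : V → ℝ) (N S : ℝ) : V ⊕ Bool → ℝ :=
  Sum.elim g (fun b => cond b N S)

@[simp] lemma mkY_inl {g : V → ℝ} {N S : ℝ} {x : V} : mkY g N S (Sum.inl x) = g x := rfl
@[simp] lemma mkY_true {g : V → ℝ} {N S : ℝ} : mkY g N S (Sum.inr true) = N := rfl
@[simp] lemma mkY_false {g : V → ℝ} {N S : ℝ} : mkY g N S (Sum.inr false) = S := rfl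

lemma sum_mkX [Fintype V] (g : V → ℝ) (A B C : ℝ) :
    ∑ p, mkX g A B C p = (∑ x, g x) + (A + B + C) := by
  rw [Fintype.sum_sum_type, Fin.sum_univ_three]
  simp

lemma sum_mkY [Fintype V] (g : V → ℝ) (N S : ℝ) :
    ∑ p, mkY g N S p = (∑ x, g x) + (N + S) := by
  rw [Fintype.sum_sum_type, Fintype.sum_bool]
  simp [add_comm]

lemma X_eq (f : (V ⊕ Fin 3) → ℝ) :
    f = mkX (fun x => f (Sum.inl x)) (f (Sum.inr 0)) (f (Sum.inr 1)) (f (Sum.inr 2)) := by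
  funext p
  rcases p with x | i
  · rfl
  · fin_cases i <;> simp

lemma Y_eq (f : (V ⊕ Bool) → ℝ) :
    f = mkY (fun x => f (Sum.inl x)) (f (Sum.inr true)) (f (Sum.inr false)) := by
  funext p
  rcases p with x | b
  · rfl
  · cases b <;> rfl

lemma mem_X [Fintype V] (H : SimpleGraph V) (u v : V) (g : V → ℝ) (A B C : ℝ)
    (h0 : ∀ x, 0 ≤ g x) (hA : 0 ≤ A) (hB : 0 ≤ B) (hC : 0 ≤ C)
    (hsum : (∑ x, g x) + (A + B + C) = 1)
    (h1 : ∀ x y, g x ≠ 0 → g y ≠ 0 → H.Adj x y → (x = u ∧ y = v) ∨ (x = v ∧ y = u))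
    (h2 : A ≠ 0 → g u = 0 ∧ B = 0)
    (h3 : B ≠ 0 → A = 0 ∧ C = 0)
    (h4 : C ≠ 0 → B = 0 ∧ g v = 0) :
    mkX g A B C ∈ (indepCx (edgeToPath4 H u v)).geomSet := by
  refine ⟨?_, ?_, ?_⟩
  · intro p
    rcases p with x | i
    · exact h0 x
    · fin_cases i <;> simpa
  · rw [sum_mkX]; exact hsum
  · intro p hp q hq hadj
    rw [mem_suppF] at hp hq
    rcases p with x | i <;> rcases q with y | j
    · rw [adj_ll] at hadj
      rcases h1 x y (by simpa using hp) (by simpa using hq) hadj.1 with h | h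
      · exact hadj.2.1 h
      · exact hadj.2.2 h
    · rw [adj_lr] at hadj
      rcases hadj with ⟨rfl, rfl⟩ | ⟨rfl, rfl⟩
      · exact hp (by simpa using (h2 (by simpa using hq)).1)
      · exact hp (by simpa using (h4 (by simpa using hq)).2)
    · rw [SimpleGraph.adj_comm, adj_lr] at hadj
      rcases hadj with ⟨rfl, rfl⟩ | ⟨rfl, rfl⟩
      · exact hq (by simpa using (h2 (by simpa using hp)).1)
      · exact hq (by simpa using (h4 (by simpa using hp)).2)
    · rw [adj_rr] at hadj
      rcases hadj with ⟨rfl, rfl⟩ | ⟨rfl, rfl⟩ | ⟨rfl, rfl⟩ | ⟨rfl, rfl⟩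
      · exact hq (by simpa using (h2 (by simpa using hp)).2)
      · exact hq (by simpa using (h3 (by simpa using hp)).1)
      · exact hq (by simpa using (h3 (by simpa using hp)).2)
      · exact hq (by simpa using (h4 (by simpa using hp)).1)

lemma mem_Y [Fintype V] (H : SimpleGraph V) (g : V → ℝ) (N S : ℝ)
    (h0 : ∀ x, 0 ≤ g x) (hN : 0 ≤ N) (hS : 0 ≤ S)
    (hsum : (∑ x, g x) + (N + S) = 1)
    (h1 : ∀ x y, g x ≠ 0 → g y ≠ 0 → ¬ H.Adj x y)
    (h2 : N = 0 ∨ S = 0) :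
    mkY g N S ∈ (suspCx (indepCx H)).geomSet := by
  refine ⟨?_, ?_, ?_, ?_⟩
  · intro p
    rcases p with x | b
    · exact h0 x
    · cases b <;> simpa
  · rw [sum_mkY]; exact hsum
  · intro x hx y hy
    rw [Finset.mem_toLeft, mem_suppF] at hx hy
    exact h1 x y (by simpa using hx) (by simpa using hy)
  · show Finset.card _ ≤ 1
    refine Finset.card_le_one.2 fun a ha b hb => ?_
    rw [Finset.mem_toRight, mem_suppF] at ha hb
    cases a <;> cases b <;> simp_all <;> rcases h2 with h | h <;> simp_all

section Main

variable [Fintype V] {H : SimpleGraph V} {u v : V}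

lemma X_props {f : V ⊕ Fin 3 → ℝ} (hf : f ∈ (indepCx (edgeToPath4 H u v)).geomSet) :
    (∀ x y, f (Sum.inl x) ≠ 0 → f (Sum.inl y) ≠ 0 → H.Adj x y →
        (x = u ∧ y = v) ∨ (x = v ∧ y = u)) ∧
    (f (Sum.inr 0) ≠ 0 → f (Sum.inl u) = 0 ∧ f (Sum.inr 1) = 0) ∧
    (f (Sum.inr 1) ≠ 0 → f (Sum.inr 0) = 0 ∧ f (Sum.inr 2) = 0) ∧
    (f (Sum.inr 2) ≠ 0 → f (Sum.inr 1) = 0 ∧ f (Sum.inl v) = 0) := by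
  obtain ⟨-, -, hs⟩ := hf
  have key : ∀ p q, f p ≠ 0 → f q ≠ 0 → ¬ (edgeToPath4 H u v).Adj p q :=
    fun p q hp hq => hs p (mem_suppF.2 hp) q (mem_suppF.2 hq)
  refine ⟨?_, ?_, ?_, ?_⟩
  · intro x y hx hy hadj
    by_contra hc
    push_neg at hc
    exact key _ _ hx hy ((adj_ll H u v x y).2
      ⟨hadj, fun ⟨h1, h2⟩ => hc.1 h1 h2, fun ⟨h1, h2⟩ => hc.2 h1 h2⟩)
  · intro hA
    constructor <;> by_contra h
    · exact key _ _ h hA ((adj_lr H u v u 0).2 (Or.inl ⟨rfl, rfl⟩))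
    · exact key _ _ hA h ((adj_rr H u v 0 1).2 (Or.inl ⟨rfl, rfl⟩))
  · intro hB
    constructor <;> by_contra h
    · exact key _ _ hB h ((adj_rr H u v 1 0).2 (Or.inr (Or.inl ⟨rfl, rfl⟩)))
    · exact key _ _ hB h ((adj_rr H u v 1 2).2 (Or.inr (Or.inr (Or.inl ⟨rfl, rfl⟩))))
  · intro hC
    constructor <;> by_contra h
    · exact key _ _ hC h ((adj_rr H u v 2 1).2 (Or.inr (Or.inr (Or.inr ⟨rfl, rfl⟩))))
    · exact key _ _ hC h ((adj_lr H u v v 2).2 (Or.inr ⟨rfl, rfl⟩)).symm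

lemma Y_props {f : V ⊕ Bool → ℝ} (hf : f ∈ (suspCx (indepCx H)).geomSet) :
    (∀ x y, f (Sum.inl x) ≠ 0 → f (Sum.inl y) ≠ 0 → ¬ H.Adj x y) ∧
    (f (Sum.inr true) = 0 ∨ f (Sum.inr false) = 0) := by
  obtain ⟨-, -, hL, hR⟩ := hf
  constructor
  · intro x y hx hy
    exact hL x (Finset.mem_toLeft.2 (mem_suppF.2 hx)) y (Finset.mem_toLeft.2 (mem_suppF.2 hy))
  · by_contra hc
    push_neg at hc
    have h1 : true ∈ (suppF f).toRight := Finset.mem_toRight.2 (mem_suppF.2 hc.1)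
    have h2 : false ∈ (suppF f).toRight := Finset.mem_toRight.2 (mem_suppF.2 hc.2)
    have : ¬ ((suppF f).toRight.card ≤ 1) := by
      intro hcard
      exact (by simp : true ≠ false) (Finset.card_le_one.1 hcard _ h1 _ h2)
    exact this hR

lemma X_sum {f : V ⊕ Fin 3 → ℝ} (hf : f ∈ (indepCx (edgeToPath4 H u v)).geomSet) :
    (∑ x, f (Sum.inl x)) + (f (Sum.inr 0) + f (Sum.inr 1) + f (Sum.inr 2)) = 1 := by
  have h := sum_mkX (fun x => f (Sum.inl x)) (f (Sum.inr 0)) (f (Sum.inr 1)) (f (Sum.inr 2))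
  rw [← X_eq f] at h
  rw [← h]
  exact hf.2.1

lemma Y_sum {f : V ⊕ Bool → ℝ} (hf : f ∈ (suspCx (indepCx H)).geomSet) :
    (∑ x, f (Sum.inl x)) + (f (Sum.inr true) + f (Sum.inr false)) = 1 := by
  have h := sum_mkY (fun x => f (Sum.inl x)) (f (Sum.inr true)) (f (Sum.inr false))
  rw [← Y_eq f] at h
  rw [← h]
  exact hf.2.1

end Main

/-- The map `φ : X → Y` on underlying functions. -/
def phiF (u v : V) (f : V ⊕ Fin 3 → ℝ) : V ⊕ Bool → ℝ :=
  mkY (upd2 (fun x => f (Sum.inl x)) u v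
        (f (Sum.inl u) - min (f (Sum.inl u)) (f (Sum.inl v)))
        (f (Sum.inl v) - min (f (Sum.inl u)) (f (Sum.inl v))))
      (f (Sum.inr 1) + 2 * min (f (Sum.inl u)) (f (Sum.inl v)))
      (f (Sum.inr 0) + f (Sum.inr 2))

/-- The map `ψ : Y → X` on underlying functions. -/
def psiF (u v : V) (f : V ⊕ Bool → ℝ) : V ⊕ Fin 3 → ℝ :=
  mkX (upd2 (fun x => f (Sum.inl x) / (1 - min (f (Sum.inr false)) (1/2))) u v
        (max (1 - 2 * f (Sum.inr false)) 0 * f (Sum.inl u) / (1 - min (f (Sum.inr false)) (1/2)))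
        (max (1 - 2 * f (Sum.inr false)) 0 * f (Sum.inl v) / (1 - min (f (Sum.inr false)) (1/2))))
      (2 * min (f (Sum.inr false)) (1/2) * f (Sum.inl v) / (1 - min (f (Sum.inr false)) (1/2))
        + max (2 * f (Sum.inr false) - 1) 0 / 2)
      (f (Sum.inr true))
      (2 * min (f (Sum.inr false)) (1/2) * f (Sum.inl u) / (1 - min (f (Sum.inr false)) (1/2))
        + max (2 * f (Sum.inr false) - 1) 0 / 2)

section Data
variable [Fintype V]

/-- All conditions for `(g,A,B,C)` to determine a point of `|I(G)|`. -/
def PX (H : SimpleGraph V) (u v : V) (g : V → ℝ) (A B C : ℝ) : Prop :=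
  (∀ x, 0 ≤ g x) ∧ (0 ≤ A) ∧ (0 ≤ B) ∧ (0 ≤ C) ∧
  ((∑ x, g x) + (A + B + C) = 1) ∧
  (∀ x y, g x ≠ 0 → g y ≠ 0 → H.Adj x y → (x = u ∧ y = v) ∨ (x = v ∧ y = u)) ∧
  (A ≠ 0 → g u = 0 ∧ B = 0) ∧
  (B ≠ 0 → A = 0 ∧ C = 0) ∧
  (C ≠ 0 → B = 0 ∧ g v = 0)

/-- All conditions for `(g,N,S)` to determine a point of `|Σ I(H)|`. -/
def PY (H : SimpleGraph V) (g : V → ℝ) (N S : ℝ) : Prop :=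
  (∀ x, 0 ≤ g x) ∧ (0 ≤ N) ∧ (0 ≤ S) ∧
  ((∑ x, g x) + (N + S) = 1) ∧
  (∀ x y, g x ≠ 0 → g y ≠ 0 → ¬ H.Adj x y) ∧
  (N = 0 ∨ S = 0)

lemma mem_X_of_PX {H : SimpleGraph V} {u v : V} {g : V → ℝ} {A B C : ℝ}
    (h : PX H u v g A B C) : mkX g A B C ∈ (indepCx (edgeToPath4 H u v)).geomSet := by
  obtain ⟨h0, hA, hB, hC, hsum, h1, h2, h3, h4⟩ := h
  exact mem_X H u v g A B C h0 hA hB hC hsum h1 h2 h3 h4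

lemma mem_Y_of_PY {H : SimpleGraph V} {g : V → ℝ} {N S : ℝ}
    (h : PY H g N S) : mkY g N S ∈ (suspCx (indepCx H)).geomSet := by
  obtain ⟨h0, hN, hS, hsum, h1, h2⟩ := h
  exact mem_Y H g N S h0 hN hS hsum h1 h2

lemma PX_of_mem {H : SimpleGraph V} {u v : V} {f : V ⊕ Fin 3 → ℝ}
    (hf : f ∈ (indepCx (edgeToPath4 H u v)).geomSet) :
    PX H u v (fun x => f (Sum.inl x)) (f (Sum.inr 0)) (f (Sum.inr 1)) (f (Sum.inr 2)) := by
  obtain ⟨h1, h2, h3, h4⟩ := X_props hf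
  exact ⟨fun x => hf.1 _, hf.1 _, hf.1 _, hf.1 _, X_sum hf, h1, h2, h3, h4⟩

lemma PY_of_mem {H : SimpleGraph V} {f : V ⊕ Bool → ℝ}
    (hf : f ∈ (suspCx (indepCx H)).geomSet) :
    PY H (fun x => f (Sum.inl x)) (f (Sum.inr true)) (f (Sum.inr false)) := by
  obtain ⟨h1, h2⟩ := Y_props hf
  exact ⟨fun x => hf.1 _, hf.1 _, hf.1 _, Y_sum hf, h1, h2⟩

end Data

section Maps
variable [Fintype V] {H : SimpleGraph V} {u v : V} {g : V → ℝ} {A B C N S : ℝ}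

lemma PY_phi (huv : H.Adj u v) (h : PX H u v g A B C) :
    PY H (upd2 g u v (g u - min (g u) (g v)) (g v - min (g u) (g v)))
      (B + 2 * min (g u) (g v)) (A + C) := by
  obtain ⟨h0, hA, hB, hC, hsum, h1, h2, h3, h4⟩ := h
  have hne : u ≠ v := huv.ne
  have hm0 : 0 ≤ min (g u) (g v) := le_min (h0 u) (h0 v)
  have hmu : min (g u) (g v) ≤ g u := min_le_left _ _
  have hmv : min (g u) (g v) ≤ g v := min_le_right _ _
  have key : ∀ z, upd2 g u v (g u - min (g u) (g v)) (g v - min (g u) (g v)) z ≠ 0 →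
      g z ≠ 0 := by
    intro z hz
    by_cases hzu : z = u
    · subst hzu
      rw [upd2_u] at hz
      intro h0'
      exact hz (by rw [h0', min_eq_left (h0 v), sub_self])
    · by_cases hzv : z = v
      · subst hzv
        rw [upd2_v hne] at hz
        intro h0'
        exact hz (by rw [h0', min_eq_right (h0 u), sub_self])
      · rwa [upd2_other hzu hzv] at hz
  refine ⟨?_, by linarith, by linarith, ?_, ?_, ?_⟩
  · intro x
    by_cases hxu : x = u
    · subst hxu; rw [upd2_u]; linarith
    · by_cases hxv : x = v
      · subst hxv; rw [upd2_v hne]; linarith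
      · rw [upd2_other hxu hxv]; exact h0 x
  · rw [sum_upd2 g u v _ _ hne]; linarith
  · intro x y hx hy hadj
    rcases h1 x y (key x hx) (key y hy) hadj with ⟨rfl, rfl⟩ | ⟨rfl, rfl⟩
    · rw [upd2_u] at hx; rw [upd2_v hne] at hy
      rcases min_choice (g x) (g y) with hmin | hmin
      · exact hx (by rw [hmin, sub_self])
      · exact hy (by rw [hmin, sub_self])
    · rw [upd2_v hne] at hx; rw [upd2_u] at hy
      rcases min_choice (g y) (g x) with hmin | hmin
      · exact hy (by rw [hmin, sub_self])
      · exact hx (by rw [hmin, sub_self])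
  · by_cases hNz : B + 2 * min (g u) (g v) = 0
    · exact Or.inl hNz
    · right
      by_cases hBz : B = 0
      · have hmne : min (g u) (g v) ≠ 0 := fun hmz => hNz (by rw [hBz, hmz]; ring)
        have hgu : g u ≠ 0 := fun hz => hmne (by rw [hz]; exact min_eq_left (h0 v))
        have hgv : g v ≠ 0 := fun hz => hmne (by rw [hz]; exact min_eq_right (h0 u))
        have hA0 : A = 0 := by by_contra hh; exact hgu (h2 hh).1
        have hC0 : C = 0 := by by_contra hh; exact hgv (h4 hh).2
        rw [hA0, hC0]; ring
      · obtain ⟨hA0, hC0⟩ := h3 hBz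
        rw [hA0, hC0]; ring

lemma PX_psi (huv : H.Adj u v) (h : PY H g N S) :
    PX H u v
      (upd2 (fun x => g x / (1 - min S (1/2))) u v
        (max (1 - 2*S) 0 * g u / (1 - min S (1/2)))
        (max (1 - 2*S) 0 * g v / (1 - min S (1/2))))
      (2 * min S (1/2) * g v / (1 - min S (1/2)) + max (2*S - 1) 0 / 2)
      N
      (2 * min S (1/2) * g u / (1 - min S (1/2)) + max (2*S - 1) 0 / 2) := by
  obtain ⟨h0, hN, hS, hsum, h1, hNS⟩ := h
  have hne : u ≠ v := huv.ne
  have hT'le : min S (1/2) ≤ 1/2 := min_le_right _ _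
  have hT'0 : 0 ≤ min S (1/2) := le_min hS (by norm_num)
  have hD : (0:ℝ) < 1 - min S (1/2) := by linarith
  have hE0 : 0 ≤ max (1 - 2*S) 0 := le_max_right _ _
  have hF0 : 0 ≤ max (2*S - 1) 0 := le_max_right _ _
  have key : ∀ z, upd2 (fun x => g x / (1 - min S (1/2))) u v
      (max (1 - 2*S) 0 * g u / (1 - min S (1/2)))
      (max (1 - 2*S) 0 * g v / (1 - min S (1/2))) z ≠ 0 → g z ≠ 0 := by
    intro z hz
    by_cases hzu : z = u
    · subst hzu; rw [upd2_u] at hz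
      intro h0'; exact hz (by rw [h0']; simp)
    · by_cases hzv : z = v
      · subst hzv; rw [upd2_v hne] at hz
        intro h0'; exact hz (by rw [h0']; simp)
      · rw [upd2_other hzu hzv] at hz
        intro h0'; exact hz (by simp only [h0', zero_div])
  have hSz_imp : S = 0 → min S (1/2) = 0 ∧ max (2*S - 1) 0 = 0 := by
    intro hSz
    constructor
    · rw [hSz]; exact min_eq_left (by norm_num)
    · rw [hSz]; exact max_eq_right (by norm_num)
  refine ⟨?_, ?_, hN, ?_, ?_, ?_, ?_, ?_, ?_⟩
  · intro x
    by_cases hxu : x = u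
    · rw [hxu, upd2_u]
      exact div_nonneg (mul_nonneg hE0 (h0 u)) hD.le
    · by_cases hxv : x = v
      · rw [hxv, upd2_v hne]
        exact div_nonneg (mul_nonneg hE0 (h0 v)) hD.le
      · rw [upd2_other hxu hxv]
        exact div_nonneg (h0 x) hD.le
  · exact add_nonneg (div_nonneg (mul_nonneg (by linarith) (h0 v)) hD.le) (by linarith)
  · exact add_nonneg (div_nonneg (mul_nonneg (by linarith) (h0 u)) hD.le) (by linarith)
  · -- the sum
    rw [sum_upd2 _ u v _ _ hne]
    have hsg : ∑ x, g x / (1 - min S (1/2)) = (∑ x, g x) / (1 - min S (1/2)) :=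
      (Finset.sum_div _ _ _).symm
    rw [hsg]
    have hgsum : ∑ x, g x = 1 - N - S := by linarith
    rw [hgsum]
    have hNS' : N * S = 0 := by rcases hNS with hh | hh <;> rw [hh] <;> ring
    rcases le_or_gt S (1/2) with hc | hc
    · rw [min_eq_left hc, max_eq_left (by linarith : (0:ℝ) ≤ 1 - 2*S),
        max_eq_right (by linarith : 2*S - 1 ≤ (0:ℝ))]
      have hDne : (1 - S) ≠ 0 := by linarith
      field_simp
      linear_combination (-2 : ℝ) * hNS'
    · rw [min_eq_right hc.le, max_eq_right (by linarith : 1 - 2*S ≤ (0:ℝ)),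
        max_eq_left (by linarith : (0:ℝ) ≤ 2*S - 1)]
      have hN0 : N = 0 := by
        rcases hNS with hh | hh
        · exact hh
        · exfalso; rw [hh] at hc; linarith
      rw [hN0]
      norm_num
      ring
  · intro x y hx hy hadj
    exact absurd hadj (h1 x y (key x hx) (key y hy))
  · -- A' ≠ 0 → u-coord = 0 ∧ N = 0
    intro hA'
    have hSne : S ≠ 0 := by
      intro hSz
      obtain ⟨e1, e2⟩ := hSz_imp hSz
      exact hA' (by rw [e1, e2]; simp)
    have hN0 : N = 0 := by rcases hNS with hh | hh; exact hh; exact absurd hh hSne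
    refine ⟨?_, hN0⟩
    rw [upd2_u]
    by_cases hFz : max (2*S - 1) 0 = 0
    · have hterm : 2 * min S (1/2) * g v / (1 - min S (1/2)) ≠ 0 :=
        fun hh => hA' (by rw [hh, hFz]; ring)
      have hgv : g v ≠ 0 := by
        intro hh; exact hterm (by rw [hh]; ring_nf)
      have hgu : g u = 0 := by
        by_contra hh; exact (h1 u v hh hgv) huv
      rw [hgu]; simp
    · have hS2 : 1/2 < S := by
        by_contra hcon
        push_neg at hcon
        exact hFz (max_eq_right (by linarith))
      rw [max_eq_right (by linarith : 1 - 2*S ≤ (0:ℝ))]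
      simp
  · -- N ≠ 0 → A' = 0 ∧ C' = 0
    intro hNne
    have hS0 : S = 0 := by rcases hNS with hh | hh; exact absurd hh hNne; exact hh
    obtain ⟨e1, e2⟩ := hSz_imp hS0
    constructor <;> (rw [e1, e2]; simp)
  · -- C' ≠ 0 → N = 0 ∧ v-coord = 0
    intro hC'
    have hSne : S ≠ 0 := by
      intro hSz
      obtain ⟨e1, e2⟩ := hSz_imp hSz
      exact hC' (by rw [e1, e2]; simp)
    have hN0 : N = 0 := by rcases hNS with hh | hh; exact hh; exact absurd hh hSne
    refine ⟨hN0, ?_⟩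
    rw [upd2_v hne]
    by_cases hFz : max (2*S - 1) 0 = 0
    · have hterm : 2 * min S (1/2) * g u / (1 - min S (1/2)) ≠ 0 :=
        fun hh => hC' (by rw [hh, hFz]; ring)
      have hgu : g u ≠ 0 := by
        intro hh; exact hterm (by rw [hh]; ring_nf)
      have hgv : g v = 0 := by
        by_contra hh; exact (h1 u v hgu hh) huv
      rw [hgv]; simp
    · have hS2 : 1/2 < S := by
        by_contra hcon
        push_neg at hcon
        exact hFz (max_eq_right (by linarith))
      rw [max_eq_right (by linarith : 1 - 2*S ≤ (0:ℝ))]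
      simp

end Maps

section Homotopies
variable [Fintype V] {H : SimpleGraph V} {u v : V} {g : V → ℝ} {A B C N S : ℝ}

lemma PX_r1t (huv : H.Adj u v) {t : ℝ} (ht0 : 0 ≤ t) (ht1 : t ≤ 1)
    (h : PX H u v g A B C) :
    PX H u v (upd2 g u v (g u - t * min (g u) (g v)) (g v - t * min (g u) (g v)))
      A (B + 2 * t * min (g u) (g v)) C := by
  obtain ⟨h0, hA, hB, hC, hsum, h1, h2, h3, h4⟩ := h
  have hne : u ≠ v := huv.ne
  have hm0 : 0 ≤ min (g u) (g v) := le_min (h0 u) (h0 v)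
  have hmu : min (g u) (g v) ≤ g u := min_le_left _ _
  have hmv : min (g u) (g v) ≤ g v := min_le_right _ _
  have htm : t * min (g u) (g v) ≤ min (g u) (g v) := by nlinarith
  have key : ∀ z, upd2 g u v (g u - t * min (g u) (g v)) (g v - t * min (g u) (g v)) z ≠ 0 →
      g z ≠ 0 := by
    intro z hz
    by_cases hzu : z = u
    · rw [hzu] at hz ⊢
      rw [upd2_u] at hz
      intro h0'; exact hz (by rw [h0', min_eq_left (h0 v), mul_zero, sub_zero])
    · by_cases hzv : z = v
      · rw [hzv] at hz ⊢
        rw [upd2_v hne] at hz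
        intro h0'; exact hz (by rw [h0', min_eq_right (h0 u), mul_zero, sub_zero])
      · rwa [upd2_other hzu hzv] at hz
  refine ⟨?_, hA, by nlinarith, hC, ?_, ?_, ?_, ?_, ?_⟩
  · intro x
    by_cases hxu : x = u
    · rw [hxu, upd2_u]; linarith
    · by_cases hxv : x = v
      · rw [hxv, upd2_v hne]; linarith
      · rw [upd2_other hxu hxv]; exact h0 x
  · rw [sum_upd2 g u v _ _ hne]; linarith
  · intro x y hx hy hadj
    exact h1 x y (key x hx) (key y hy) hadj
  · intro hA'
    obtain ⟨hgu, hB0⟩ := h2 hA'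
    have hmz : min (g u) (g v) = 0 := by rw [hgu]; exact min_eq_left (h0 v)
    refine ⟨by rw [upd2_u, hmz, hgu, mul_zero, sub_zero], by rw [hB0, hmz]; ring⟩
  · intro hB'
    by_cases hBz : B = 0
    · have hmne : min (g u) (g v) ≠ 0 := by
        intro hmz; exact hB' (by rw [hBz, hmz]; ring)
      have hgu : g u ≠ 0 := fun hz => hmne (by rw [hz]; exact min_eq_left (h0 v))
      have hgv : g v ≠ 0 := fun hz => hmne (by rw [hz]; exact min_eq_right (h0 u))
      exact ⟨by by_contra hh; exact hgu (h2 hh).1, by by_contra hh; exact hgv (h4 hh).2⟩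
    · exact h3 hBz
  · intro hC'
    obtain ⟨hB0, hgv⟩ := h4 hC'
    have hmz : min (g u) (g v) = 0 := by rw [hgv]; exact min_eq_right (h0 u)
    refine ⟨by rw [hB0, hmz]; ring, by rw [upd2_v hne, hmz, hgv, mul_zero, sub_zero]⟩

lemma PX_H2a (huv : H.Adj u v) {t : ℝ} (ht0 : 0 ≤ t) (ht1 : t ≤ 1)
    (h : PX H u v g A B C) :
    PX H u v (upd2 g u v ((1 - 2*t*min (A+C) (1/2)) * g u) ((1 - 2*t*min (A+C) (1/2)) * g v))
      (A + 2*t*min (A+C) (1/2) * g v) B (C + 2*t*min (A+C) (1/2) * g u) := by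
  obtain ⟨h0, hA, hB, hC, hsum, h1, h2, h3, h4⟩ := h
  have hne : u ≠ v := huv.ne
  have hT'0 : 0 ≤ min (A+C) (1/2) := le_min (by linarith) (by norm_num)
  have hT'le : min (A+C) (1/2) ≤ 1/2 := min_le_right _ _
  have hco : 0 ≤ 1 - 2*t*min (A+C) (1/2) := by nlinarith
  have key : ∀ z, upd2 g u v ((1 - 2*t*min (A+C) (1/2)) * g u)
      ((1 - 2*t*min (A+C) (1/2)) * g v) z ≠ 0 → g z ≠ 0 := by
    intro z hz
    by_cases hzu : z = u
    · rw [hzu] at hz ⊢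
      rw [upd2_u] at hz
      intro h0'; exact hz (by rw [h0', mul_zero])
    · by_cases hzv : z = v
      · rw [hzv] at hz ⊢
        rw [upd2_v hne] at hz
        intro h0'; exact hz (by rw [h0', mul_zero])
      · rwa [upd2_other hzu hzv] at hz
  have hAne : (A + 2*t*min (A+C) (1/2) * g v ≠ 0) → A ≠ 0 := by
    intro hA' hAz
    apply hA'
    rw [hAz]
    by_cases hgv : g v = 0
    · rw [hgv]; ring
    · have hC0 : C = 0 := by by_contra hh; exact hgv (h4 hh).2
      rw [hC0]
      norm_num [min_eq_left]
  have hCne : (C + 2*t*min (A+C) (1/2) * g u ≠ 0) → C ≠ 0 := by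
    intro hC' hCz
    apply hC'
    rw [hCz]
    by_cases hgu : g u = 0
    · rw [hgu]; ring
    · have hA0 : A = 0 := by by_contra hh; exact hgu (h2 hh).1
      rw [hA0]
      norm_num [min_eq_left]
  refine ⟨?_, ?_, hB, ?_, ?_, ?_, ?_, ?_, ?_⟩
  · intro x
    by_cases hxu : x = u
    · rw [hxu, upd2_u]; exact mul_nonneg hco (h0 u)
    · by_cases hxv : x = v
      · rw [hxv, upd2_v hne]; exact mul_nonneg hco (h0 v)
      · rw [upd2_other hxu hxv]; exact h0 x
  · have := mul_nonneg (mul_nonneg (by linarith : (0:ℝ) ≤ 2*t) hT'0) (h0 v)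
    nlinarith
  · have := mul_nonneg (mul_nonneg (by linarith : (0:ℝ) ≤ 2*t) hT'0) (h0 u)
    nlinarith
  · rw [sum_upd2 g u v _ _ hne]; ring_nf; linarith
  · intro x y hx hy hadj
    exact h1 x y (key x hx) (key y hy) hadj
  · intro hA'
    obtain ⟨hgu, hB0⟩ := h2 (hAne hA')
    exact ⟨by rw [upd2_u, hgu, mul_zero], hB0⟩
  · intro hB'
    obtain ⟨hA0, hC0⟩ := h3 hB'
    rw [hA0, hC0]
    norm_num [min_eq_left]
  · intro hC'
    obtain ⟨hB0, hgv⟩ := h4 (hCne hC')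
    exact ⟨hB0, by rw [upd2_v hne, hgv, mul_zero]⟩

end Homotopies

section Homotopies2
variable [Fintype V] {H : SimpleGraph V} {u v : V} {g : V → ℝ} {A B C N S : ℝ}

lemma PX_H2b (huv : H.Adj u v) {t : ℝ} (ht0 : 0 ≤ t) (ht1 : t ≤ 1)
    (h : PX H u v g A B C) :
    PX H u v
      (upd2 (fun x => (1-t) * g x + t * (g x / (1 - min (A+C) (1/2)))) u v
        ((1-t) * ((1 - 2*min (A+C) (1/2)) * g u)
          + t * (max (1 - 2*(A+C)) 0 * g u / (1 - min (A+C) (1/2))))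
        ((1-t) * ((1 - 2*min (A+C) (1/2)) * g v)
          + t * (max (1 - 2*(A+C)) 0 * g v / (1 - min (A+C) (1/2)))))
      ((1-t) * (A + 2*min (A+C) (1/2) * g v)
        + t * (2*min (A+C) (1/2) * g v / (1 - min (A+C) (1/2)) + max (2*(A+C) - 1) 0 / 2))
      B
      ((1-t) * (C + 2*min (A+C) (1/2) * g u)
        + t * (2*min (A+C) (1/2) * g u / (1 - min (A+C) (1/2)) + max (2*(A+C) - 1) 0 / 2)) := by
  obtain ⟨h0, hA, hB, hC, hsum, h1, h2, h3, h4⟩ := h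
  have hne : u ≠ v := huv.ne
  have hT'0 : 0 ≤ min (A+C) (1/2) := le_min (by linarith) (by norm_num)
  have hT'le : min (A+C) (1/2) ≤ 1/2 := min_le_right _ _
  have hD : (0:ℝ) < 1 - min (A+C) (1/2) := by linarith
  have hE0 : 0 ≤ max (1 - 2*(A+C)) 0 := le_max_right _ _
  have hF0 : 0 ≤ max (2*(A+C) - 1) 0 := le_max_right _ _
  have hco : 0 ≤ 1 - 2*min (A+C) (1/2) := by linarith
  have ht1' : 0 ≤ 1 - t := by linarith
  have key : ∀ z, upd2 (fun x => (1-t) * g x + t * (g x / (1 - min (A+C) (1/2)))) u v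
      ((1-t) * ((1 - 2*min (A+C) (1/2)) * g u)
        + t * (max (1 - 2*(A+C)) 0 * g u / (1 - min (A+C) (1/2))))
      ((1-t) * ((1 - 2*min (A+C) (1/2)) * g v)
        + t * (max (1 - 2*(A+C)) 0 * g v / (1 - min (A+C) (1/2)))) z ≠ 0 → g z ≠ 0 := by
    intro z hz
    by_cases hzu : z = u
    · rw [hzu] at hz ⊢
      rw [upd2_u] at hz
      intro h0'; exact hz (by rw [h0']; simp)
    · by_cases hzv : z = v
      · rw [hzv] at hz ⊢
        rw [upd2_v hne] at hz
        intro h0'; exact hz (by rw [h0']; simp)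
      · rw [upd2_other hzu hzv] at hz
        intro h0'; exact hz (by rw [h0']; simp)
  refine ⟨?_, ?_, hB, ?_, ?_, ?_, ?_, ?_, ?_⟩
  · intro x
    by_cases hxu : x = u
    · rw [hxu, upd2_u]
      exact add_nonneg (mul_nonneg ht1' (mul_nonneg hco (h0 u)))
        (mul_nonneg ht0 (div_nonneg (mul_nonneg hE0 (h0 u)) hD.le))
    · by_cases hxv : x = v
      · rw [hxv, upd2_v hne]
        exact add_nonneg (mul_nonneg ht1' (mul_nonneg hco (h0 v)))
          (mul_nonneg ht0 (div_nonneg (mul_nonneg hE0 (h0 v)) hD.le))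
      · rw [upd2_other hxu hxv]
        exact add_nonneg (mul_nonneg ht1' (h0 x)) (mul_nonneg ht0 (div_nonneg (h0 x) hD.le))
  · exact add_nonneg (mul_nonneg ht1' (add_nonneg hA (mul_nonneg (by linarith) (h0 v))))
      (mul_nonneg ht0 (add_nonneg (div_nonneg (mul_nonneg (by linarith) (h0 v)) hD.le)
        (by linarith)))
  · exact add_nonneg (mul_nonneg ht1' (add_nonneg hC (mul_nonneg (by linarith) (h0 u))))
      (mul_nonneg ht0 (add_nonneg (div_nonneg (mul_nonneg (by linarith) (h0 u)) hD.le)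
        (by linarith)))
  · -- sum
    rw [sum_upd2 _ u v _ _ hne]
    have hsplit : ∑ x, ((1-t) * g x + t * (g x / (1 - min (A+C) (1/2))))
        = (1-t) * (∑ x, g x) + t * ((∑ x, g x) / (1 - min (A+C) (1/2))) := by
      rw [Finset.sum_add_distrib, ← Finset.mul_sum, ← Finset.mul_sum, ← Finset.sum_div]
    rw [hsplit]
    have hgsum : ∑ x, g x = 1 - A - B - C := by linarith
    rw [hgsum]
    by_cases hBz : B = 0
    · rw [hBz]
      rcases le_or_gt (A+C) (1/2) with hc | hc
      · rw [min_eq_left hc, max_eq_left (by linarith : (0:ℝ) ≤ 1 - 2*(A+C)),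
          max_eq_right (by linarith : 2*(A+C) - 1 ≤ (0:ℝ))]
        have hDne : (1 - (A+C)) ≠ 0 := by linarith
        field_simp
        ring
      · rw [min_eq_right hc.le, max_eq_right (by linarith : 1 - 2*(A+C) ≤ (0:ℝ)),
          max_eq_left (by linarith : (0:ℝ) ≤ 2*(A+C) - 1)]
        norm_num
        ring
    · obtain ⟨hA0, hC0⟩ := h3 hBz
      rw [hA0, hC0]
      norm_num [min_eq_left, max_eq_right]
      ring
  · intro x y hx hy hadj
    exact h1 x y (key x hx) (key y hy) hadj
  · -- A' ≠ 0
    intro hA'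
    by_cases hFz : max (2*(A+C) - 1) 0 = 0
    · by_cases hAz : A = 0
      · exfalso
        have hterm : ¬ (min (A+C) (1/2) = 0 ∨ g v = 0) := by
          intro hm
          apply hA'
          rcases hm with hm | hm <;> rw [hm, hFz, hAz] <;> ring
        push_neg at hterm
        obtain ⟨hT'ne, hgv⟩ := hterm
        have hC0 : C = 0 := by by_contra hh; exact hgv (h4 hh).2
        exact hT'ne (by rw [hAz, hC0]; norm_num)
      · obtain ⟨hgu, hB0⟩ := h2 hAz
        exact ⟨by rw [upd2_u, hgu]; ring, hB0⟩
    · have hT2 : 1/2 < A + C := by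
        by_contra hcon
        push_neg at hcon
        exact hFz (max_eq_right (by linarith))
      have hB0 : B = 0 := by
        by_contra hh
        obtain ⟨a0, c0⟩ := h3 hh
        rw [a0, c0] at hT2
        norm_num at hT2
      refine ⟨?_, hB0⟩
      rw [upd2_u, min_eq_right (by linarith : (1:ℝ)/2 ≤ A+C),
        max_eq_right (by linarith : 1 - 2*(A+C) ≤ (0:ℝ))]
      norm_num
  · intro hB'
    obtain ⟨hA0, hC0⟩ := h3 hB'
    rw [hA0, hC0]
    norm_num [min_eq_left, max_eq_right]
  · -- C' ≠ 0
    intro hC'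
    by_cases hFz : max (2*(A+C) - 1) 0 = 0
    · by_cases hCz : C = 0
      · exfalso
        have hterm : ¬ (min (A+C) (1/2) = 0 ∨ g u = 0) := by
          intro hm
          apply hC'
          rcases hm with hm | hm <;> rw [hm, hFz, hCz] <;> ring
        push_neg at hterm
        obtain ⟨hT'ne, hgu⟩ := hterm
        have hA0 : A = 0 := by by_contra hh; exact hgu (h2 hh).1
        exact hT'ne (by rw [hCz, hA0]; norm_num)
      · obtain ⟨hB0, hgv⟩ := h4 hCz
        exact ⟨hB0, by rw [upd2_v hne, hgv]; ring⟩
    · have hT2 : 1/2 < A + C := by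
        by_contra hcon
        push_neg at hcon
        exact hFz (max_eq_right (by linarith))
      have hB0 : B = 0 := by
        by_contra hh
        obtain ⟨a0, c0⟩ := h3 hh
        rw [a0, c0] at hT2
        norm_num at hT2
      refine ⟨hB0, ?_⟩
      rw [upd2_v hne, min_eq_right (by linarith : (1:ℝ)/2 ≤ A+C),
        max_eq_right (by linarith : 1 - 2*(A+C) ≤ (0:ℝ))]
      norm_num

lemma PY_H1 (huv : H.Adj u v) {t : ℝ} (ht0 : 0 ≤ t) (ht1 : t ≤ 1)
    (h : PY H g N S) :
    PY H
      (upd2 (fun x => (1-t) * g x + t * (g x / (1 - min S (1/2)))) u v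
        ((1-t) * g u + t * (max (1 - 2*S) 0 * g u / (1 - min S (1/2))))
        ((1-t) * g v + t * (max (1 - 2*S) 0 * g v / (1 - min S (1/2)))))
      N
      ((1-t) * S + t * ((2*min S (1/2) * g v / (1 - min S (1/2)) + max (2*S - 1) 0 / 2)
        + (2*min S (1/2) * g u / (1 - min S (1/2)) + max (2*S - 1) 0 / 2))) := by
  obtain ⟨h0, hN, hS, hsum, h1, hNS⟩ := h
  have hne : u ≠ v := huv.ne
  have hT'0 : 0 ≤ min S (1/2) := le_min hS (by norm_num)
  have hT'le : min S (1/2) ≤ 1/2 := min_le_right _ _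
  have hD : (0:ℝ) < 1 - min S (1/2) := by linarith
  have hE0 : 0 ≤ max (1 - 2*S) 0 := le_max_right _ _
  have hF0 : 0 ≤ max (2*S - 1) 0 := le_max_right _ _
  have ht1' : 0 ≤ 1 - t := by linarith
  have key : ∀ z, upd2 (fun x => (1-t) * g x + t * (g x / (1 - min S (1/2)))) u v
      ((1-t) * g u + t * (max (1 - 2*S) 0 * g u / (1 - min S (1/2))))
      ((1-t) * g v + t * (max (1 - 2*S) 0 * g v / (1 - min S (1/2)))) z ≠ 0 → g z ≠ 0 := by
    intro z hz
    by_cases hzu : z = u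
    · rw [hzu] at hz ⊢
      rw [upd2_u] at hz
      intro h0'; exact hz (by rw [h0']; simp)
    · by_cases hzv : z = v
      · rw [hzv] at hz ⊢
        rw [upd2_v hne] at hz
        intro h0'; exact hz (by rw [h0']; simp)
      · rw [upd2_other hzu hzv] at hz
        intro h0'; exact hz (by rw [h0']; simp)
  refine ⟨?_, hN, ?_, ?_, ?_, ?_⟩
  · intro x
    by_cases hxu : x = u
    · rw [hxu, upd2_u]
      exact add_nonneg (mul_nonneg ht1' (h0 u))
        (mul_nonneg ht0 (div_nonneg (mul_nonneg hE0 (h0 u)) hD.le))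
    · by_cases hxv : x = v
      · rw [hxv, upd2_v hne]
        exact add_nonneg (mul_nonneg ht1' (h0 v))
          (mul_nonneg ht0 (div_nonneg (mul_nonneg hE0 (h0 v)) hD.le))
      · rw [upd2_other hxu hxv]
        exact add_nonneg (mul_nonneg ht1' (h0 x)) (mul_nonneg ht0 (div_nonneg (h0 x) hD.le))
  · exact add_nonneg (mul_nonneg ht1' hS)
      (mul_nonneg ht0 (add_nonneg
        (add_nonneg (div_nonneg (mul_nonneg (by linarith) (h0 v)) hD.le) (by linarith))
        (add_nonneg (div_nonneg (mul_nonneg (by linarith) (h0 u)) hD.le) (by linarith))))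
  · -- sum
    rw [sum_upd2 _ u v _ _ hne]
    have hsplit : ∑ x, ((1-t) * g x + t * (g x / (1 - min S (1/2))))
        = (1-t) * (∑ x, g x) + t * ((∑ x, g x) / (1 - min S (1/2))) := by
      rw [Finset.sum_add_distrib, ← Finset.mul_sum, ← Finset.mul_sum, ← Finset.sum_div]
    rw [hsplit]
    have hgsum : ∑ x, g x = 1 - N - S := by linarith
    rw [hgsum]
    rcases hNS with hN0 | hS0
    · rw [hN0]
      rcases le_or_gt S (1/2) with hc | hc
      · rw [min_eq_left hc, max_eq_left (by linarith : (0:ℝ) ≤ 1 - 2*S),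
          max_eq_right (by linarith : 2*S - 1 ≤ (0:ℝ))]
        have hDne : (1 - S) ≠ 0 := by linarith
        field_simp
        ring
      · rw [min_eq_right hc.le, max_eq_right (by linarith : 1 - 2*S ≤ (0:ℝ)),
          max_eq_left (by linarith : (0:ℝ) ≤ 2*S - 1)]
        norm_num
        ring
    · rw [hS0]
      norm_num [min_eq_left, max_eq_right]
      ring
  · intro x y hx hy
    exact h1 x y (key x hx) (key y hy)
  · -- pole condition
    by_cases hN0 : N = 0
    · exact Or.inl hN0
    · right
      have hS0 : S = 0 := by rcases hNS with hh | hh; exact absurd hh hN0; exact hh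
      rw [hS0]
      norm_num [min_eq_left, max_eq_right]

end Homotopies2

section Bundled
variable [Fintype V] {H : SimpleGraph V}

/-- Stage-1 homotopy (kill the `u,v` overlap into `b`), parametric in `t`. -/
def K1F (u v : V) (t : ℝ) (f : V ⊕ Fin 3 → ℝ) : V ⊕ Fin 3 → ℝ :=
  mkX (upd2 (fun x => f (Sum.inl x)) u v
        (f (Sum.inl u) - t * min (f (Sum.inl u)) (f (Sum.inl v)))
        (f (Sum.inl v) - t * min (f (Sum.inl u)) (f (Sum.inl v))))
      (f (Sum.inr 0))
      (f (Sum.inr 1) + 2 * t * min (f (Sum.inl u)) (f (Sum.inl v)))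
      (f (Sum.inr 2))

/-- Stage-2a homotopy (partial transfer `u→c`, `v→a`), parametric in `t`. -/
def K2aF (u v : V) (t : ℝ) (f : V ⊕ Fin 3 → ℝ) : V ⊕ Fin 3 → ℝ :=
  mkX (upd2 (fun x => f (Sum.inl x)) u v
        ((1 - 2*t*min (f (Sum.inr 0) + f (Sum.inr 2)) (1/2)) * f (Sum.inl u))
        ((1 - 2*t*min (f (Sum.inr 0) + f (Sum.inr 2)) (1/2)) * f (Sum.inl v)))
      (f (Sum.inr 0) + 2*t*min (f (Sum.inr 0) + f (Sum.inr 2)) (1/2) * f (Sum.inl v))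
      (f (Sum.inr 1))
      (f (Sum.inr 2) + 2*t*min (f (Sum.inr 0) + f (Sum.inr 2)) (1/2) * f (Sum.inl u))

/-- Stage-2b homotopy (from the `M`-point to `ψφ`), parametric in `t`. -/
def K2bF (u v : V) (t : ℝ) (f : V ⊕ Fin 3 → ℝ) : V ⊕ Fin 3 → ℝ :=
  mkX (upd2 (fun x => (1-t) * f (Sum.inl x)
          + t * (f (Sum.inl x) / (1 - min (f (Sum.inr 0) + f (Sum.inr 2)) (1/2)))) u v
        ((1-t) * ((1 - 2*min (f (Sum.inr 0) + f (Sum.inr 2)) (1/2)) * f (Sum.inl u))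
          + t * (max (1 - 2*(f (Sum.inr 0) + f (Sum.inr 2))) 0 * f (Sum.inl u)
              / (1 - min (f (Sum.inr 0) + f (Sum.inr 2)) (1/2))))
        ((1-t) * ((1 - 2*min (f (Sum.inr 0) + f (Sum.inr 2)) (1/2)) * f (Sum.inl v))
          + t * (max (1 - 2*(f (Sum.inr 0) + f (Sum.inr 2))) 0 * f (Sum.inl v)
              / (1 - min (f (Sum.inr 0) + f (Sum.inr 2)) (1/2)))))
      ((1-t) * (f (Sum.inr 0) + 2*min (f (Sum.inr 0) + f (Sum.inr 2)) (1/2) * f (Sum.inl v))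
        + t * (2*min (f (Sum.inr 0) + f (Sum.inr 2)) (1/2) * f (Sum.inl v)
              / (1 - min (f (Sum.inr 0) + f (Sum.inr 2)) (1/2))
            + max (2*(f (Sum.inr 0) + f (Sum.inr 2)) - 1) 0 / 2))
      (f (Sum.inr 1))
      ((1-t) * (f (Sum.inr 2) + 2*min (f (Sum.inr 0) + f (Sum.inr 2)) (1/2) * f (Sum.inl u))
        + t * (2*min (f (Sum.inr 0) + f (Sum.inr 2)) (1/2) * f (Sum.inl u)
              / (1 - min (f (Sum.inr 0) + f (Sum.inr 2)) (1/2))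
            + max (2*(f (Sum.inr 0) + f (Sum.inr 2)) - 1) 0 / 2))

/-- Homotopy on the suspension side (from `id` to `φψ`), parametric in `t`. -/
def KYF (u v : V) (t : ℝ) (f : V ⊕ Bool → ℝ) : V ⊕ Bool → ℝ :=
  mkY (upd2 (fun x => (1-t) * f (Sum.inl x)
          + t * (f (Sum.inl x) / (1 - min (f (Sum.inr false)) (1/2)))) u v
        ((1-t) * f (Sum.inl u) + t * (max (1 - 2*f (Sum.inr false)) 0 * f (Sum.inl u)
            / (1 - min (f (Sum.inr false)) (1/2))))
        ((1-t) * f (Sum.inl v) + t * (max (1 - 2*f (Sum.inr false)) 0 * f (Sum.inl v)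
            / (1 - min (f (Sum.inr false)) (1/2)))))
      (f (Sum.inr true))
      ((1-t) * f (Sum.inr false)
        + t * ((2*min (f (Sum.inr false)) (1/2) * f (Sum.inl v)
              / (1 - min (f (Sum.inr false)) (1/2)) + max (2*f (Sum.inr false) - 1) 0 / 2)
          + (2*min (f (Sum.inr false)) (1/2) * f (Sum.inl u)
              / (1 - min (f (Sum.inr false)) (1/2)) + max (2*f (Sum.inr false) - 1) 0 / 2)))

variable {u v : V}

lemma phiF_mem (huv : H.Adj u v) {f : V ⊕ Fin 3 → ℝ}
    (hf : f ∈ (indepCx (edgeToPath4 H u v)).geomSet) :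
    phiF u v f ∈ (suspCx (indepCx H)).geomSet :=
  mem_Y_of_PY (PY_phi huv (PX_of_mem hf))

lemma psiF_mem (huv : H.Adj u v) {f : V ⊕ Bool → ℝ}
    (hf : f ∈ (suspCx (indepCx H)).geomSet) :
    psiF u v f ∈ (indepCx (edgeToPath4 H u v)).geomSet :=
  mem_X_of_PX (PX_psi huv (PY_of_mem hf))

lemma K1F_mem (huv : H.Adj u v) {t : ℝ} (ht0 : 0 ≤ t) (ht1 : t ≤ 1) {f : V ⊕ Fin 3 → ℝ}
    (hf : f ∈ (indepCx (edgeToPath4 H u v)).geomSet) :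
    K1F u v t f ∈ (indepCx (edgeToPath4 H u v)).geomSet :=
  mem_X_of_PX (PX_r1t huv ht0 ht1 (PX_of_mem hf))

lemma K2aF_mem (huv : H.Adj u v) {t : ℝ} (ht0 : 0 ≤ t) (ht1 : t ≤ 1) {f : V ⊕ Fin 3 → ℝ}
    (hf : f ∈ (indepCx (edgeToPath4 H u v)).geomSet) :
    K2aF u v t f ∈ (indepCx (edgeToPath4 H u v)).geomSet :=
  mem_X_of_PX (PX_H2a huv ht0 ht1 (PX_of_mem hf))

lemma K2bF_mem (huv : H.Adj u v) {t : ℝ} (ht0 : 0 ≤ t) (ht1 : t ≤ 1) {f : V ⊕ Fin 3 → ℝ}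
    (hf : f ∈ (indepCx (edgeToPath4 H u v)).geomSet) :
    K2bF u v t f ∈ (indepCx (edgeToPath4 H u v)).geomSet :=
  mem_X_of_PX (PX_H2b huv ht0 ht1 (PX_of_mem hf))

lemma KYF_mem (huv : H.Adj u v) {t : ℝ} (ht0 : 0 ≤ t) (ht1 : t ≤ 1) {f : V ⊕ Bool → ℝ}
    (hf : f ∈ (suspCx (indepCx H)).geomSet) :
    KYF u v t f ∈ (suspCx (indepCx H)).geomSet :=
  mem_Y_of_PY (PY_H1 huv ht0 ht1 (PY_of_mem hf))

end Bundled

section Boundary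
variable [Fintype V] {u v : V}

lemma K1F_zero (hne : u ≠ v) (f : V ⊕ Fin 3 → ℝ) : K1F u v 0 f = f := by
  funext p
  rcases p with x | i
  · simp only [K1F, mkX_inl]
    by_cases hxu : x = u
    · rw [hxu, upd2_u]; ring
    · by_cases hxv : x = v
      · rw [hxv, upd2_v hne]; ring
      · rw [upd2_other hxu hxv]
  · fin_cases i <;> simp [K1F] <;> ring

lemma K2aF_zero (hne : u ≠ v) (f : V ⊕ Fin 3 → ℝ) : K2aF u v 0 f = f := by
  funext p
  rcases p with x | i
  · simp only [K2aF, mkX_inl]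
    by_cases hxu : x = u
    · rw [hxu, upd2_u]; ring
    · by_cases hxv : x = v
      · rw [hxv, upd2_v hne]; ring
      · rw [upd2_other hxu hxv]
  · fin_cases i <;> simp [K2aF] <;> ring

lemma K2bF_zero (hne : u ≠ v) (f : V ⊕ Fin 3 → ℝ) : K2bF u v 0 f = K2aF u v 1 f := by
  funext p
  rcases p with x | i
  · simp only [K2bF, K2aF, mkX_inl]
    by_cases hxu : x = u
    · rw [hxu, upd2_u, upd2_u]; ring
    · by_cases hxv : x = v
      · rw [hxv, upd2_v hne, upd2_v hne]; ring
      · rw [upd2_other hxu hxv, upd2_other hxu hxv]; ring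
  · fin_cases i <;> simp [K2bF, K2aF] <;> ring

lemma K2bF_one (hne : u ≠ v) (f : V ⊕ Fin 3 → ℝ) :
    K2bF u v 1 (K1F u v 1 f) = psiF u v (phiF u v f) := by
  have h0' : K1F u v 1 f (Sum.inr 0) = f (Sum.inr 0) := by simp [K1F]
  have h2' : K1F u v 1 f (Sum.inr 2) = f (Sum.inr 2) := by simp [K1F]
  have hp0 : phiF u v f (Sum.inr false) = f (Sum.inr 0) + f (Sum.inr 2) := by simp [phiF]
  funext p
  rcases p with x | i
  · by_cases hxu : x = u
    · rw [hxu]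
      simp only [K2bF, psiF, K1F, phiF, mkX_inl, mkX_inr0, mkX_inr1, mkX_inr2, mkY_inl, mkY_true, mkY_false, upd2_u]
      ring
    · by_cases hxv : x = v
      · rw [hxv]
        simp only [K2bF, psiF, K1F, phiF, mkX_inl, mkX_inr0, mkX_inr1, mkX_inr2, mkY_inl, mkY_true, mkY_false, upd2_v hne]
        ring
      · simp only [K2bF, psiF, K1F, phiF, mkX_inl, mkX_inr0, mkX_inr1, mkX_inr2, mkY_inl, mkY_true, mkY_false, upd2_other hxu hxv]
        ring
  · fin_cases i
    · show K2bF u v 1 (K1F u v 1 f) (Sum.inr 0) = psiF u v (phiF u v f) (Sum.inr 0)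
      simp only [K2bF, psiF, K1F, phiF, mkX_inl, mkX_inr0, mkX_inr1, mkX_inr2, mkY_inl, mkY_true, mkY_false, upd2_v hne]
      ring
    · show K2bF u v 1 (K1F u v 1 f) (Sum.inr 1) = psiF u v (phiF u v f) (Sum.inr 1)
      simp only [K2bF, psiF, K1F, phiF, mkX_inl, mkX_inr0, mkX_inr1, mkX_inr2, mkY_inl, mkY_true, mkY_false]
      ring
    · show K2bF u v 1 (K1F u v 1 f) (Sum.inr 2) = psiF u v (phiF u v f) (Sum.inr 2)
      simp only [K2bF, psiF, K1F, phiF, mkX_inl, mkX_inr0, mkX_inr1, mkX_inr2, mkY_inl, mkY_true, mkY_false, upd2_u]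
      ring

lemma KYF_zero (hne : u ≠ v) (f : V ⊕ Bool → ℝ) : KYF u v 0 f = f := by
  funext p
  rcases p with x | b
  · simp only [KYF, mkY_inl]
    by_cases hxu : x = u
    · rw [hxu, upd2_u]; ring
    · by_cases hxv : x = v
      · rw [hxv, upd2_v hne]; ring
      · rw [upd2_other hxu hxv]; ring
  · cases b
    · simp only [KYF, mkY_false]; ring
    · simp only [KYF, mkY_true]

lemma KYF_one (hne : u ≠ v) (f : V ⊕ Bool → ℝ) (h0 : ∀ p, 0 ≤ f p)
    (hz : f (Sum.inl u) = 0 ∨ f (Sum.inl v) = 0) :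
    KYF u v 1 f = phiF u v (psiF u v f) := by
  have hD : (0:ℝ) < 1 - min (f (Sum.inr false)) (1/2) := by
    have : min (f (Sum.inr false)) (1/2) ≤ 1/2 := min_le_right _ _
    linarith
  have hpu : psiF u v f (Sum.inl u)
      = max (1 - 2*f (Sum.inr false)) 0 * f (Sum.inl u) / (1 - min (f (Sum.inr false)) (1/2)) := by
    simp only [psiF, mkX_inl]; rw [upd2_u]
  have hpv : psiF u v f (Sum.inl v)
      = max (1 - 2*f (Sum.inr false)) 0 * f (Sum.inl v) / (1 - min (f (Sum.inr false)) (1/2)) := by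
    simp only [psiF, mkX_inl]; rw [upd2_v hne]
  have hm' : min (psiF u v f (Sum.inl u)) (psiF u v f (Sum.inl v)) = 0 := by
    rw [hpu, hpv]
    rcases hz with h | h
    · rw [h, mul_zero, zero_div]
      exact min_eq_left (div_nonneg (mul_nonneg (le_max_right _ _) (h0 _)) hD.le)
    · rw [h, mul_zero, zero_div]
      exact min_eq_right (div_nonneg (mul_nonneg (le_max_right _ _) (h0 _)) hD.le)
  funext p
  rcases p with x | b
  · simp only [KYF, mkY_inl, phiF]
    by_cases hxu : x = u
    · rw [hxu, upd2_u, upd2_u, hm', hpu]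
      ring
    · by_cases hxv : x = v
      · rw [hxv, upd2_v hne, upd2_v hne, hm', hpv]
        ring
      · rw [upd2_other hxu hxv, upd2_other hxu hxv]
        simp only [psiF, mkX_inl]
        rw [upd2_other hxu hxv]
        ring
  · cases b
    · show KYF u v 1 f (Sum.inr false) = phiF u v (psiF u v f) (Sum.inr false)
      simp only [KYF, mkY_false, phiF]
      simp only [psiF, mkX_inr0, mkX_inr2]
      ring
    · show KYF u v 1 f (Sum.inr true) = phiF u v (psiF u v f) (Sum.inr true)
      simp only [KYF, mkY_true, phiF]
      rw [hm']
      simp only [psiF, mkX_inr1]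
      ring

end Boundary

section Continuity
variable {u v : V}

lemma cont_phiF_raw (hne : u ≠ v) :
    Continuous fun f : (V ⊕ Fin 3) → ℝ => phiF u v f := by
  apply continuous_pi
  intro p
  rcases p with x | b
  · simp only [phiF, mkY_inl]
    by_cases hxu : x = u
    · rw [hxu]; simp only [upd2_u]; fun_prop
    · by_cases hxv : x = v
      · rw [hxv]; simp only [upd2_v hne]; fun_prop
      · simp only [upd2_other hxu hxv]; fun_prop
  · cases b
    · simp only [phiF, mkY_false]; fun_prop
    · simp only [phiF, mkY_true]; fun_prop

lemma cont_psiF_raw (hne : u ≠ v) :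
    Continuous fun f : (V ⊕ Bool) → ℝ => psiF u v f := by
  have hinv : Continuous (fun f : (V ⊕ Bool) → ℝ =>
      (1 - min (f (Sum.inr false)) (1/2))⁻¹) := by
    apply Continuous.inv₀
    · fun_prop
    · intro f
      have := min_le_right (f (Sum.inr false)) (1/2:ℝ)
      intro h; linarith
  apply continuous_pi
  intro p
  rcases p with x | i
  · simp only [psiF, mkX_inl]
    by_cases hxu : x = u
    · rw [hxu]; simp only [upd2_u, div_eq_mul_inv]; fun_prop
    · by_cases hxv : x = v
      · rw [hxv]; simp only [upd2_v hne, div_eq_mul_inv]; fun_prop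
      · simp only [upd2_other hxu hxv, div_eq_mul_inv]; fun_prop
  · fin_cases i
    · show Continuous fun f : (V ⊕ Bool) → ℝ => psiF u v f (Sum.inr 0)
      simp only [psiF, mkX_inr0, div_eq_mul_inv]; fun_prop
    · show Continuous fun f : (V ⊕ Bool) → ℝ => psiF u v f (Sum.inr 1)
      simp only [psiF, mkX_inr1]; fun_prop
    · show Continuous fun f : (V ⊕ Bool) → ℝ => psiF u v f (Sum.inr 2)
      simp only [psiF, mkX_inr2, div_eq_mul_inv]; fun_prop

lemma cont_K1F_raw (hne : u ≠ v) :
    Continuous fun q : ℝ × ((V ⊕ Fin 3) → ℝ) => K1F u v q.1 q.2 := by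
  apply continuous_pi
  intro p
  rcases p with x | i
  · simp only [K1F, mkX_inl]
    by_cases hxu : x = u
    · rw [hxu]; simp only [upd2_u]; fun_prop
    · by_cases hxv : x = v
      · rw [hxv]; simp only [upd2_v hne]; fun_prop
      · simp only [upd2_other hxu hxv]; fun_prop
  · fin_cases i
    · show Continuous fun q : ℝ × ((V ⊕ Fin 3) → ℝ) => K1F u v q.1 q.2 (Sum.inr 0)
      simp only [K1F, mkX_inr0]; fun_prop
    · show Continuous fun q : ℝ × ((V ⊕ Fin 3) → ℝ) => K1F u v q.1 q.2 (Sum.inr 1)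
      simp only [K1F, mkX_inr1]; fun_prop
    · show Continuous fun q : ℝ × ((V ⊕ Fin 3) → ℝ) => K1F u v q.1 q.2 (Sum.inr 2)
      simp only [K1F, mkX_inr2]; fun_prop

lemma cont_K2aF_raw (hne : u ≠ v) :
    Continuous fun q : ℝ × ((V ⊕ Fin 3) → ℝ) => K2aF u v q.1 q.2 := by
  apply continuous_pi
  intro p
  rcases p with x | i
  · simp only [K2aF, mkX_inl]
    by_cases hxu : x = u
    · rw [hxu]; simp only [upd2_u]; fun_prop
    · by_cases hxv : x = v
      · rw [hxv]; simp only [upd2_v hne]; fun_prop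
      · simp only [upd2_other hxu hxv]; fun_prop
  · fin_cases i
    · show Continuous fun q : ℝ × ((V ⊕ Fin 3) → ℝ) => K2aF u v q.1 q.2 (Sum.inr 0)
      simp only [K2aF, mkX_inr0]; fun_prop
    · show Continuous fun q : ℝ × ((V ⊕ Fin 3) → ℝ) => K2aF u v q.1 q.2 (Sum.inr 1)
      simp only [K2aF, mkX_inr1]; fun_prop
    · show Continuous fun q : ℝ × ((V ⊕ Fin 3) → ℝ) => K2aF u v q.1 q.2 (Sum.inr 2)
      simp only [K2aF, mkX_inr2]; fun_prop

lemma cont_K2bF_raw (hne : u ≠ v) :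
    Continuous fun q : ℝ × ((V ⊕ Fin 3) → ℝ) => K2bF u v q.1 q.2 := by
  have hinv : Continuous (fun q : ℝ × ((V ⊕ Fin 3) → ℝ) =>
      (1 - min (q.2 (Sum.inr 0) + q.2 (Sum.inr 2)) (1/2))⁻¹) := by
    apply Continuous.inv₀
    · fun_prop
    · intro q
      have := min_le_right (q.2 (Sum.inr 0) + q.2 (Sum.inr 2)) (1/2:ℝ)
      intro h; linarith
  apply continuous_pi
  intro p
  rcases p with x | i
  · simp only [K2bF, mkX_inl]
    by_cases hxu : x = u
    · rw [hxu]; simp only [upd2_u, div_eq_mul_inv]; fun_prop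
    · by_cases hxv : x = v
      · rw [hxv]; simp only [upd2_v hne, div_eq_mul_inv]; fun_prop
      · simp only [upd2_other hxu hxv, div_eq_mul_inv]; fun_prop
  · fin_cases i
    · show Continuous fun q : ℝ × ((V ⊕ Fin 3) → ℝ) => K2bF u v q.1 q.2 (Sum.inr 0)
      simp only [K2bF, mkX_inr0, div_eq_mul_inv]; fun_prop
    · show Continuous fun q : ℝ × ((V ⊕ Fin 3) → ℝ) => K2bF u v q.1 q.2 (Sum.inr 1)
      simp only [K2bF, mkX_inr1]; fun_prop
    · show Continuous fun q : ℝ × ((V ⊕ Fin 3) → ℝ) => K2bF u v q.1 q.2 (Sum.inr 2)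
      simp only [K2bF, mkX_inr2, div_eq_mul_inv]; fun_prop

lemma cont_KYF_raw (hne : u ≠ v) :
    Continuous fun q : ℝ × ((V ⊕ Bool) → ℝ) => KYF u v q.1 q.2 := by
  have hinv : Continuous (fun q : ℝ × ((V ⊕ Bool) → ℝ) =>
      (1 - min (q.2 (Sum.inr false)) (1/2))⁻¹) := by
    apply Continuous.inv₀
    · fun_prop
    · intro q
      have := min_le_right (q.2 (Sum.inr false)) (1/2:ℝ)
      intro h; linarith
  apply continuous_pi
  intro p
  rcases p with x | b
  · simp only [KYF, mkY_inl]
    by_cases hxu : x = u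
    · rw [hxu]; simp only [upd2_u, div_eq_mul_inv]; fun_prop
    · by_cases hxv : x = v
      · rw [hxv]; simp only [upd2_v hne, div_eq_mul_inv]; fun_prop
      · simp only [upd2_other hxu hxv, div_eq_mul_inv]; fun_prop
  · cases b
    · simp only [KYF, mkY_false, div_eq_mul_inv]; fun_prop
    · simp only [KYF, mkY_true]; fun_prop

end Continuity

section Assembly
variable [Fintype V] {H : SimpleGraph V} {u v : V}

/-- The bundled map `φ : |I(G)| → |Σ I(H)|`. -/
def phiC (huv : H.Adj u v) :
    C(↥((indepCx (edgeToPath4 H u v)).geomSet), ↥((suspCx (indepCx H)).geomSet)) :=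
  ⟨fun f => ⟨phiF u v (f : (V ⊕ Fin 3) → ℝ), phiF_mem huv f.2⟩,
   Continuous.subtype_mk ((cont_phiF_raw huv.ne).comp continuous_subtype_val) _⟩

/-- The bundled map `ψ : |Σ I(H)| → |I(G)|`. -/
def psiC (huv : H.Adj u v) :
    C(↥((suspCx (indepCx H)).geomSet), ↥((indepCx (edgeToPath4 H u v)).geomSet)) :=
  ⟨fun f => ⟨psiF u v (f : (V ⊕ Bool) → ℝ), psiF_mem huv f.2⟩,
   Continuous.subtype_mk ((cont_psiF_raw huv.ne).comp continuous_subtype_val) _⟩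

/-- The bundled retraction `r₁`. -/
def r1C (huv : H.Adj u v) :
    C(↥((indepCx (edgeToPath4 H u v)).geomSet), ↥((indepCx (edgeToPath4 H u v)).geomSet)) :=
  ⟨fun f => ⟨K1F u v 1 (f : (V ⊕ Fin 3) → ℝ), K1F_mem huv zero_le_one le_rfl f.2⟩,
   Continuous.subtype_mk ((cont_K1F_raw huv.ne).comp
     (Continuous.prodMk continuous_const continuous_subtype_val)) _⟩

/-- The bundled map `M ∘ r₁`. -/
def MC (huv : H.Adj u v) :
    C(↥((indepCx (edgeToPath4 H u v)).geomSet), ↥((indepCx (edgeToPath4 H u v)).geomSet)) :=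
  ⟨fun f => ⟨K2aF u v 1 (K1F u v 1 (f : (V ⊕ Fin 3) → ℝ)),
      K2aF_mem huv zero_le_one le_rfl (K1F_mem huv zero_le_one le_rfl f.2)⟩,
   Continuous.subtype_mk ((cont_K2aF_raw huv.ne).comp
     (Continuous.prodMk continuous_const ((cont_K1F_raw huv.ne).comp
       (Continuous.prodMk continuous_const continuous_subtype_val)))) _⟩

/-- Stage-1 homotopy, bundled. -/
def HK1 (huv : H.Adj u v) :
    ContinuousMap.Homotopy (ContinuousMap.id _) (r1C huv) where
  toFun := fun p => ⟨K1F u v (p.1 : ℝ) (p.2 : (V ⊕ Fin 3) → ℝ),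
    K1F_mem huv p.1.2.1 p.1.2.2 p.2.2⟩
  continuous_toFun := Continuous.subtype_mk ((cont_K1F_raw huv.ne).comp
    (Continuous.prodMk (continuous_subtype_val.comp continuous_fst)
      (continuous_subtype_val.comp continuous_snd))) _
  map_zero_left := fun f => Subtype.ext (K1F_zero huv.ne (f : (V ⊕ Fin 3) → ℝ))
  map_one_left := fun f => rfl

/-- Stage-2a homotopy, bundled. -/
def HK2a (huv : H.Adj u v) :
    ContinuousMap.Homotopy (r1C huv) (MC huv) where
  toFun := fun p => ⟨K2aF u v (p.1 : ℝ) (K1F u v 1 (p.2 : (V ⊕ Fin 3) → ℝ)),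
    K2aF_mem huv p.1.2.1 p.1.2.2 (K1F_mem huv zero_le_one le_rfl p.2.2)⟩
  continuous_toFun := Continuous.subtype_mk ((cont_K2aF_raw huv.ne).comp
    (Continuous.prodMk (continuous_subtype_val.comp continuous_fst)
      ((cont_K1F_raw huv.ne).comp (Continuous.prodMk continuous_const
        (continuous_subtype_val.comp continuous_snd))))) _
  map_zero_left := fun f => Subtype.ext (K2aF_zero huv.ne (K1F u v 1 (f : (V ⊕ Fin 3) → ℝ)))
  map_one_left := fun f => rfl

/-- Stage-2b homotopy, bundled. -/
def HK2b (huv : H.Adj u v) :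
    ContinuousMap.Homotopy (MC huv) ((psiC huv).comp (phiC huv)) where
  toFun := fun p => ⟨K2bF u v (p.1 : ℝ) (K1F u v 1 (p.2 : (V ⊕ Fin 3) → ℝ)),
    K2bF_mem huv p.1.2.1 p.1.2.2 (K1F_mem huv zero_le_one le_rfl p.2.2)⟩
  continuous_toFun := Continuous.subtype_mk ((cont_K2bF_raw huv.ne).comp
    (Continuous.prodMk (continuous_subtype_val.comp continuous_fst)
      ((cont_K1F_raw huv.ne).comp (Continuous.prodMk continuous_const
        (continuous_subtype_val.comp continuous_snd))))) _
  map_zero_left := fun f => Subtype.ext (K2bF_zero huv.ne (K1F u v 1 (f : (V ⊕ Fin 3) → ℝ)))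
  map_one_left := fun f => Subtype.ext (K2bF_one huv.ne (f : (V ⊕ Fin 3) → ℝ))

/-- The homotopy on the suspension side, bundled. -/
def HKY (huv : H.Adj u v) :
    ContinuousMap.Homotopy (ContinuousMap.id _) ((phiC huv).comp (psiC huv)) where
  toFun := fun p => ⟨KYF u v (p.1 : ℝ) (p.2 : (V ⊕ Bool) → ℝ),
    KYF_mem huv p.1.2.1 p.1.2.2 p.2.2⟩
  continuous_toFun := Continuous.subtype_mk ((cont_KYF_raw huv.ne).comp
    (Continuous.prodMk (continuous_subtype_val.comp continuous_fst)
      (continuous_subtype_val.comp continuous_snd))) _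
  map_zero_left := fun f => Subtype.ext (KYF_zero huv.ne (f : (V ⊕ Bool) → ℝ))
  map_one_left := fun f => Subtype.ext (KYF_one huv.ne (f : (V ⊕ Bool) → ℝ)
    (fun p => f.2.1 p)
    (by
      by_cases h : (f : (V ⊕ Bool) → ℝ) (Sum.inl u) = 0
      · exact Or.inl h
      · by_cases h' : (f : (V ⊕ Bool) → ℝ) (Sum.inl v) = 0
        · exact Or.inr h'
        · exact absurd huv ((Y_props f.2).1 u v h h')))

/-- The homotopy equivalence, bundled. -/
def csorbaEquiv (huv : H.Adj u v) :
    ContinuousMap.HomotopyEquiv (↥((indepCx (edgeToPath4 H u v)).geomSet))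
      (↥((suspCx (indepCx H)).geomSet)) where
  toFun := phiC huv
  invFun := psiC huv
  left_inv := ⟨((HK1 huv).trans ((HK2a huv).trans (HK2b huv))).symm⟩
  right_inv := ⟨(HKY huv).symm⟩

end Assembly

end CsorbaAux

/-- Csorba reduction.  If `G` is obtained from a finite simple graph `H`
by replacing an edge `[u,v]` by a path of length 4, then `I(G)` is homotopy equivalent to
the suspension `Σ I(H) = I(H) * S⁰`. -/
theorem csorba_reduction {V : Type} [Fintype V] (H : SimpleGraph V) (u v : V)
    (huv : H.Adj u v) :
    Nonempty (ContinuousMap.HomotopyEquiv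
      ((indepCx (edgeToPath4 H u v)).geom) ((suspCx (indepCx H)).geom)) := by
  exact ⟨CsorbaAux.csorbaEquiv huv⟩

end
end

section
/- Let G be a finite simple graph and let v, w be two vertices of G such that v dominates w. If v and w are not adjacent in G, then the independence complex I(G) is homotopy equivalent to I(G − v), the independence complex of the graph obtained by deleting the vertex v. -/
open scoped Classical

noncomputable section

/-- `v` dominates `w` in `G` if `N(w) ∪ {w} ∪ {v} ⊆ N(v) ∪ {v} ∪ {w}`. -/
def Dominates {V : Type} (G : SimpleGraph V) (v w : V) : Prop :=
  G.neighborSet w ∪ {w} ∪ {v} ⊆ G.neighborSet v ∪ {v} ∪ {w}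

namespace Dom37

/-- The coordinate function of a point of the geometric realization. -/
def geomVal {V : Type} [Fintype V] {K : ACx V} (f : K.geom) : V → ℝ := Subtype.val f

theorem geomVal_mem {V : Type} [Fintype V] {K : ACx V} (f : K.geom) :
    geomVal f ∈ K.geomSet := Subtype.prop f

/-- Build a point of the realization. -/
def geomMk {V : Type} [Fintype V] {K : ACx V} (f : V → ℝ) (h : f ∈ K.geomSet) : K.geom :=
  Subtype.mk f h

theorem geomMk_val {V : Type} [Fintype V] {K : ACx V} (f : V → ℝ) (h : f ∈ K.geomSet) :
    geomVal (geomMk f h) = f := rfl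

theorem geom_ext {V : Type} [Fintype V] {K : ACx V} {f g : K.geom}
    (h : geomVal f = geomVal g) : f = g := Subtype.ext h

theorem continuous_geomVal {V : Type} [Fintype V] {K : ACx V} :
    Continuous (geomVal : K.geom → V → ℝ) := continuous_subtype_val

theorem continuous_geomMk {V : Type} [Fintype V] {K : ACx V} {X : Type*} [TopologicalSpace X]
    {g : X → V → ℝ} (hc : Continuous g) (h : ∀ x, g x ∈ K.geomSet) :
    Continuous (fun x => (geomMk (g x) (h x) : K.geom)) :=
  Continuous.subtype_mk hc h

variable {V : Type} [Fintype V] [DecidableEq V]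

theorem mem_suppF {f : V → ℝ} {x : V} : x ∈ suppF f ↔ f x ≠ 0 := by simp [suppF]

/-- Extend a function on `V \ {v}` by zero at `v`. -/
def extFun (v : V) (f : ({x : V | x ≠ v} : Set V) → ℝ) : V → ℝ :=
  fun x => if h : x = v then 0 else f ⟨x, h⟩

/-- Restrict a function to `V \ {v}`, moving the mass of `v` to `w`. -/
def resFun (v : V) {w : V} (hwv : w ∈ ({x : V | x ≠ v} : Set V)) (f : V → ℝ) :
    ({x : V | x ≠ v} : Set V) → ℝ :=
  fun x => f ↑x + if x = ⟨w, hwv⟩ then f v else 0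

theorem sum_subtype_add (v : V) (f : V → ℝ) :
    f v + ∑ x : ({x : V | x ≠ v} : Set V), f ↑x = ∑ x, f x := by
  have h : ∑ x ∈ Finset.univ.erase v, f x = ∑ x : ({x : V | x ≠ v} : Set V), f ↑x :=
    Finset.sum_subtype _ (by intro x; simp) f
  rw [← h, Finset.add_sum_erase _ _ (Finset.mem_univ v)]

theorem sum_extFun (v : V) (f : ({x : V | x ≠ v} : Set V) → ℝ) :
    ∑ x, extFun v f x = ∑ x : ({x : V | x ≠ v} : Set V), f x := by
  rw [← sum_subtype_add v (extFun v f)]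
  have h0 : extFun v f v = 0 := dif_pos rfl
  rw [h0, zero_add]
  apply Finset.sum_congr rfl
  intro x _
  have : extFun v f ↑x = f ⟨↑x, x.2⟩ := dif_neg x.2
  rw [this]

theorem sum_resFun (v : V) {w : V} (hwv : w ∈ ({x : V | x ≠ v} : Set V)) (f : V → ℝ) :
    ∑ x : ({x : V | x ≠ v} : Set V), resFun v hwv f x = ∑ x, f x := by
  unfold resFun
  rw [Finset.sum_add_distrib, Finset.sum_ite_eq' Finset.univ (⟨w, hwv⟩ : ({x : V | x ≠ v} : Set V)) (fun _ => f v), if_pos (Finset.mem_univ _)]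
  rw [add_comm, sum_subtype_add]

section Graph

variable {G : SimpleGraph V} {v w : V} (hvw : v ≠ w)
  (hdom : Dominates G v w) (hnadj : ¬ G.Adj v w)

theorem adj_of_adj_w (hdom : Dominates G v w) (hnadj : ¬ G.Adj v w)
    {a : V} (ha : G.Adj w a) : G.Adj v a := by
  have h1 : a ∈ G.neighborSet w ∪ {w} ∪ {v} := Or.inl (Or.inl ha)
  rcases hdom h1 with (h | h) | h
  · exact h
  · exact absurd (h ▸ ha) (fun h' => hnadj h'.symm)
  · exact absurd (h ▸ ha) (G.loopless.irrefl w)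

/-- Key combinatorial fact: if each of `a`, `b` is either in the support of `f` or
equal to `w` with `v` in the support of `f`, then `a` and `b` are non-adjacent. -/
theorem key (hdom : Dominates G v w) (hnadj : ¬ G.Adj v w)
    {f : V → ℝ} (hf : suppF f ∈ (indepCx G).faces) {a b : V}
    (ha : f a ≠ 0 ∨ (a = w ∧ f v ≠ 0)) (hb : f b ≠ 0 ∨ (b = w ∧ f v ≠ 0))
    (hadj : G.Adj a b) : False := by
  have mem : ∀ {x : V}, f x ≠ 0 → x ∈ suppF f := fun h => mem_suppF.2 h
  rcases ha with ha | ⟨haw, hav⟩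
  · rcases hb with hb | ⟨hbw, hbv⟩
    · exact hf a (mem ha) b (mem hb) hadj
    · have h1 : G.Adj w a := by rw [hbw] at hadj; exact hadj.symm
      exact hf v (mem hbv) a (mem ha) (adj_of_adj_w hdom hnadj h1)
  · rcases hb with hb | ⟨hbw, hbv⟩
    · have h1 : G.Adj w b := by rw [haw] at hadj; exact hadj
      exact hf v (mem hav) b (mem hb) (adj_of_adj_w hdom hnadj h1)
    · rw [haw, hbw] at hadj; exact G.loopless.irrefl w hadj

theorem ext_mem {f : ({x : V | x ≠ v} : Set V) → ℝ}
    (hf : f ∈ (indepCx (G.induce {x | x ≠ v})).geomSet) :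
    extFun v f ∈ (indepCx G).geomSet := by
  obtain ⟨hnn, hsum, hface⟩ := hf
  refine ⟨?_, ?_, ?_⟩
  · intro x
    unfold extFun
    split
    · exact le_refl 0
    · exact hnn _
  · rw [sum_extFun]; exact hsum
  · intro a ha b hb hadj
    rw [mem_suppF] at ha hb
    unfold extFun at ha hb
    by_cases hav : a = v
    · rw [dif_pos hav] at ha; exact ha rfl
    by_cases hbv : b = v
    · rw [dif_pos hbv] at hb; exact hb rfl
    rw [dif_neg hav] at ha
    rw [dif_neg hbv] at hb
    exact hface ⟨a, hav⟩ (mem_suppF.2 ha) ⟨b, hbv⟩ (mem_suppF.2 hb) hadj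

theorem mem_supp_res {f : V → ℝ} (hnn : ∀ x, 0 ≤ f x)
    {hwv : w ∈ ({x : V | x ≠ v} : Set V)} {a : ({x : V | x ≠ v} : Set V)}
    (ha : resFun v hwv f a ≠ 0) : f ↑a ≠ 0 ∨ ((a : V) = w ∧ f v ≠ 0) := by
  unfold resFun at ha
  by_cases haw : a = (⟨w, hwv⟩ : ({x : V | x ≠ v} : Set V))
  · rw [if_pos haw] at ha
    have hav : (a : V) = w := by rw [haw]
    by_cases h1 : f ↑a = 0
    · right
      refine ⟨hav, ?_⟩
      intro h2
      rw [h1, h2] at ha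
      exact ha (by norm_num)
    · exact Or.inl h1
  · rw [if_neg haw, add_zero] at ha
    exact Or.inl ha

theorem res_mem (hdom : Dominates G v w) (hnadj : ¬ G.Adj v w)
    {hwv : w ∈ ({x : V | x ≠ v} : Set V)} {f : V → ℝ}
    (hf : f ∈ (indepCx G).geomSet) :
    resFun v hwv f ∈ (indepCx (G.induce {x | x ≠ v})).geomSet := by
  obtain ⟨hnn, hsum, hface⟩ := hf
  refine ⟨?_, ?_, ?_⟩
  · intro x
    unfold resFun
    have := hnn (x : V)
    have := hnn v
    split <;> linarith
  · rw [sum_resFun]; exact hsum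
  · intro a ha b hb hadj
    rw [mem_suppF] at ha hb
    exact key hdom hnadj hface (mem_supp_res hnn ha) (mem_supp_res hnn hb) hadj

/-- membership for points of the straight-line homotopy -/
theorem line_mem (hdom : Dominates G v w) (hnadj : ¬ G.Adj v w)
    {hwv : w ∈ ({x : V | x ≠ v} : Set V)} {f : V → ℝ}
    (hf : f ∈ (indepCx G).geomSet) {t : ℝ} (ht0 : 0 ≤ t) (ht1 : t ≤ 1) :
    (fun x => (1 - t) * f x + t * extFun v (resFun v hwv f) x) ∈ (indepCx G).geomSet := by
  obtain ⟨hnn, hsum, hface⟩ := hf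
  have gmem : extFun v (resFun v hwv f) ∈ (indepCx G).geomSet :=
    ext_mem (res_mem hdom hnadj ⟨hnn, hsum, hface⟩)
  obtain ⟨gnn, gsum, _⟩ := gmem
  refine ⟨?_, ?_, ?_⟩
  · intro x
    dsimp only
    have h1 := hnn x
    have h2 := gnn x
    have : 0 ≤ (1 - t) * f x := mul_nonneg (by linarith) h1
    have : 0 ≤ t * extFun v (resFun v hwv f) x := mul_nonneg ht0 h2
    linarith
  · rw [Finset.sum_add_distrib, ← Finset.mul_sum, ← Finset.mul_sum, hsum, gsum]
    ring
  · intro a ha b hb hadj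
    rw [mem_suppF] at ha hb
    have cond : ∀ {x : V},
        (1 - t) * f x + t * extFun v (resFun v hwv f) x ≠ 0 →
        f x ≠ 0 ∨ (x = w ∧ f v ≠ 0) := by
      intro x hx
      by_cases h1 : f x ≠ 0
      · exact Or.inl h1
      push_neg at h1
      have h2 : extFun v (resFun v hwv f) x ≠ 0 := by
        intro h3
        rw [h1, h3] at hx
        exact hx (by ring)
      unfold extFun at h2
      by_cases hxv : x = v
      · rw [dif_pos hxv] at h2; exact absurd rfl h2
      rw [dif_neg hxv] at h2
      rcases mem_supp_res hnn h2 with h3 | ⟨h3, h4⟩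
      · exact absurd h1 h3
      · exact Or.inr ⟨h3, h4⟩
    exact key hdom hnadj hface (cond ha) (cond hb) hadj

end Graph

theorem continuous_resFun_apply (v : V) {w : V} (hwv : w ∈ ({x : V | x ≠ v} : Set V))
    (x : ({x : V | x ≠ v} : Set V)) :
    Continuous (fun u : V → ℝ => resFun v hwv u x) := by
  unfold resFun
  apply Continuous.add (continuous_apply _)
  split_ifs
  · exact continuous_apply v
  · exact continuous_const

theorem continuous_extFun_apply (v : V) (x : V) :
    Continuous (fun u : ({x : V | x ≠ v} : Set V) → ℝ => extFun v u x) := by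
  unfold extFun
  split
  · exact continuous_const
  · exact continuous_apply _

theorem continuous_resFun (v : V) {w : V} (hwv : w ∈ ({x : V | x ≠ v} : Set V)) :
    Continuous (fun u : V → ℝ => resFun v hwv u) :=
  continuous_pi fun x => continuous_resFun_apply v hwv x

theorem continuous_extFun (v : V) :
    Continuous (fun u : ({x : V | x ≠ v} : Set V) → ℝ => extFun v u) :=
  continuous_pi fun x => continuous_extFun_apply v x

theorem continuous_extres (v : V) {w : V} (hwv : w ∈ ({x : V | x ≠ v} : Set V)) (x : V) :
    Continuous (fun u : V → ℝ => extFun v (resFun v hwv u) x) :=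
  (continuous_extFun_apply v x).comp (continuous_resFun v hwv)

end Dom37

open Dom37

/-- If `v` dominates `w` in a finite simple graph `G` and `v`, `w` are
not adjacent, then `I(G)` is homotopy equivalent to `I(G − v)`. -/
theorem indepCx_domination_delete {V : Type} [Fintype V] [DecidableEq V]
    (G : SimpleGraph V) (v w : V) (hvw : v ≠ w)
    (hdom : Dominates G v w) (hnadj : ¬ G.Adj v w) :
    Nonempty (ContinuousMap.HomotopyEquiv
      ((indepCx G).geom) ((indepCx (G.induce {x | x ≠ v})).geom)) := by
  have hwv : w ∈ ({x : V | x ≠ v} : Set V) := hvw.symm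
  -- the restriction map
  refine ⟨ContinuousMap.HomotopyEquiv.mk
    ⟨fun f => geomMk (resFun v hwv (geomVal f)) (res_mem hdom hnadj (geomVal_mem f)),
      continuous_geomMk ((continuous_resFun v hwv).comp continuous_geomVal) _⟩
    ⟨fun f => geomMk (extFun v (geomVal f)) (ext_mem (geomVal_mem f)),
      continuous_geomMk ((continuous_extFun v).comp continuous_geomVal) _⟩
    ?_ ?_⟩
  · -- E ∘ R ≃ id via straight-line homotopy
    refine ContinuousMap.Homotopic.symm ⟨ContinuousMap.Homotopy.mk
      ⟨fun p => geomMk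
          (fun x => (1 - (p.1 : ℝ)) * geomVal p.2 x +
            (p.1 : ℝ) * extFun v (resFun v hwv (geomVal p.2)) x)
          (line_mem hdom hnadj (geomVal_mem p.2) p.1.2.1 p.1.2.2),
        ?_⟩ ?_ ?_⟩
    · apply continuous_geomMk
      apply continuous_pi
      intro x
      have hc : Continuous fun p : ↥unitInterval × (indepCx G).geom => (p.1 : ℝ) :=
        continuous_subtype_val.comp continuous_fst
      have hA : Continuous fun p : ↥unitInterval × (indepCx G).geom => geomVal p.2 x :=
        (continuous_apply x).comp (continuous_geomVal.comp continuous_snd)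
      have hB : Continuous fun p : ↥unitInterval × (indepCx G).geom =>
          extFun v (resFun v hwv (geomVal p.2)) x :=
        (continuous_extres v hwv x).comp (continuous_geomVal.comp continuous_snd)
      exact (((continuous_const.sub hc).mul hA).add (hc.mul hB))
    · intro f
      apply geom_ext
      funext x
      show (1 - ((0 : ↥unitInterval) : ℝ)) * geomVal f x + _ * _ = geomVal f x
      norm_num
    · intro f
      apply geom_ext
      funext x
      show (1 - ((1 : ↥unitInterval) : ℝ)) * geomVal f x +
        ((1 : ↥unitInterval) : ℝ) * extFun v (resFun v hwv (geomVal f)) x =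
        extFun v (resFun v hwv (geomVal f)) x
      norm_num
  · -- R ∘ E = id
    have heq : ∀ (f : (indepCx (G.induce {x | x ≠ v})).geom) (x : ({x : V | x ≠ v} : Set V)),
        resFun v hwv (extFun v (geomVal f)) x = geomVal f x := by
      intro f x
      unfold resFun
      have h1 : extFun v (geomVal f) ↑x = geomVal f ⟨↑x, x.2⟩ := dif_neg x.2
      have h2 : extFun v (geomVal f) v = 0 := dif_pos rfl
      rw [h1, h2]
      simp
    have : ∀ f, resFun v hwv (extFun v (geomVal f)) = geomVal f :=
      fun f => funext (heq f)
    refine ⟨ContinuousMap.Homotopy.mk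
      ⟨fun p => p.2, continuous_snd⟩ ?_ ?_⟩
    · intro f
      exact geom_ext (this f).symm
    · intro f
      rfl

end
end

section
/- Let G be a finite simple graph containing two distinct vertices v and w that are non-adjacent and have the same neighborhood, N_G(v) = N_G(w). Then the independence complex I(G) is homotopy equivalent to I(G − v), the independence complex of the graph obtained by deleting v. -/
open scoped Classical

noncomputable section

/-- Key independence lemma: if `f` is supported on an independent set, then pairs of
vertices that are either in the support of `f`, or equal to `w` while `v` is in the
support, are non-adjacent. -/
theorem key_indep {V : Type} [Fintype V] (G : SimpleGraph V) (v w : V)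
    (hnbr : G.neighborSet v = G.neighborSet w)
    (f : V → ℝ) (hf : suppF f ∈ (indepCx G).faces)
    {a b : V}
    (ha : f a ≠ 0 ∨ (a = w ∧ f v ≠ 0)) (hb : f b ≠ 0 ∨ (b = w ∧ f v ≠ 0)) :
    ¬ G.Adj a b := by
  have hmem : ∀ x, f x ≠ 0 → x ∈ suppF f := by
    intro x hx
    simp [suppF, hx]
  have hiff : ∀ u, G.Adj v u ↔ G.Adj w u := by
    intro u
    have := Set.ext_iff.mp hnbr u
    simpa [SimpleGraph.mem_neighborSet] using this
  intro hadj
  rcases ha with ha | ⟨rfl, hv⟩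
  · rcases hb with hb | ⟨rfl, hv⟩
    · exact hf a (hmem a ha) b (hmem b hb) hadj
    · exact hf a (hmem a ha) v (hmem v hv) (((hiff a).mpr hadj.symm).symm)
  · rcases hb with hb | ⟨rfl, hv2⟩
    · exact hf v (hmem v hv) b (hmem b hb) ((hiff b).mpr hadj)
    · exact G.loopless.irrefl _ hadj

/-- If `v ≠ w` are non-adjacent vertices of a finite simple graph `G`
with the same neighborhood `N(v) = N(w)`, then `I(G)` is homotopy equivalent to
`I(G − v)`. -/
theorem indepCx_same_neighborhood_delete {V : Type} [Fintype V] [DecidableEq V]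
    (G : SimpleGraph V) (v w : V) (hvw : v ≠ w) (hnadj : ¬ G.Adj v w)
    (hnbr : G.neighborSet v = G.neighborSet w) :
    Nonempty (ContinuousMap.HomotopyEquiv
      ((indepCx G).geom) ((indepCx (G.induce {x | x ≠ v})).geom)) := by
  classical
  set S : Set V := {x | x ≠ v} with hS
  have hwS : w ∈ S := Ne.symm hvw
  -- the retraction on barycentric coordinate functions
  set rF : (V → ℝ) → (↥S → ℝ) := fun f u => if (u : V) = w then f w + f v else f u with hrF
  -- the inclusion on barycentric coordinate functions
  set iF : (↥S → ℝ) → (V → ℝ) := fun g x => if h : x ∈ S then g ⟨x, h⟩ else 0 with hiF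
  -- sums over the subtype versus the full type
  have sum_sub : ∀ f : V → ℝ, ∑ u : ↥S, f u.1 = ∑ x ∈ Finset.univ.erase v, f x := by
    intro f
    exact (Finset.sum_subtype (p := fun x => x ∈ S) (Finset.univ.erase v)
      (by intro x; simp [hS]) f).symm
  have erase_add : ∀ f : V → ℝ, (∑ x ∈ Finset.univ.erase v, f x) + f v = ∑ x, f x := by
    intro f
    exact Finset.sum_erase_add _ _ (Finset.mem_univ v)
  -- membership for the inclusion
  have hiF_mem : ∀ g ∈ (indepCx (G.induce S)).geomSet, iF g ∈ (indepCx G).geomSet := by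
    intro g hg
    obtain ⟨hg0, hg1, hgs⟩ := hg
    refine ⟨?_, ?_, ?_⟩
    · intro x
      simp only [hiF]
      split
      · exact hg0 _
      · exact le_refl 0
    · have hv0 : iF g v = 0 := by simp [hiF, hS]
      have : ∀ u : ↥S, iF g u.1 = g u := by
        intro u
        simp [hiF, u.2]
      rw [← erase_add (iF g), hv0, add_zero, ← sum_sub (iF g)]
      rw [Finset.sum_congr rfl fun u _ => this u]
      exact hg1
    · intro a ha b hb hadj
      simp only [suppF, Finset.mem_filter, hiF] at ha hb
      obtain ⟨-, ha⟩ := ha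
      obtain ⟨-, hb⟩ := hb
      by_cases haS : a ∈ S
      · by_cases hbS : b ∈ S
        · rw [dif_pos haS] at ha
          rw [dif_pos hbS] at hb
          have hamem : (⟨a, haS⟩ : ↥S) ∈ suppF g := by simp [suppF, ha]
          have hbmem : (⟨b, hbS⟩ : ↥S) ∈ suppF g := by simp [suppF, hb]
          exact hgs _ hamem _ hbmem hadj
        · rw [dif_neg hbS] at hb; exact hb rfl
      · rw [dif_neg haS] at ha; exact ha rfl
  -- membership for the retraction
  have hrF_supp : ∀ f : V → ℝ, (∀ x, 0 ≤ f x) → ∀ u : ↥S, rF f u ≠ 0 →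
      f u.1 ≠ 0 ∨ (u.1 = w ∧ f v ≠ 0) := by
    intro f hf0 u hu
    simp only [hrF] at hu
    by_cases huw : (u : V) = w
    · rw [if_pos huw] at hu
      by_cases hfw : f w = 0
      · right
        refine ⟨huw, ?_⟩
        intro hfv
        rw [hfw, hfv, add_zero] at hu
        exact hu rfl
      · left; rw [huw]; exact hfw
    · rw [if_neg huw] at hu
      exact Or.inl hu
  have hrF_mem : ∀ f ∈ (indepCx G).geomSet, rF f ∈ (indepCx (G.induce S)).geomSet := by
    intro f hf
    obtain ⟨hf0, hf1, hfs⟩ := hf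
    refine ⟨?_, ?_, ?_⟩
    · intro u
      simp only [hrF]
      split
      · exact add_nonneg (hf0 _) (hf0 _)
      · exact hf0 _
    · have : ∀ u : ↥S, rF f u = f u.1 + (if u = (⟨w, hwS⟩ : ↥S) then f v else 0) := by
        intro u
        simp only [hrF]
        by_cases huw : (u : V) = w
        · rw [if_pos huw, if_pos (Subtype.ext huw), huw]
        · rw [if_neg huw, if_neg (fun h => huw (by rw [h])), add_zero]
      rw [Finset.sum_congr rfl fun u _ => this u, Finset.sum_add_distrib,
        Finset.sum_ite_eq' Finset.univ (⟨w, hwS⟩ : ↥S) (fun _ => f v),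
        if_pos (Finset.mem_univ _), sum_sub f, erase_add f]
      exact hf1
    · intro a ha b hb hadj
      simp only [suppF, Finset.mem_filter] at ha hb
      exact key_indep G v w hnbr f hfs (hrF_supp f hf0 a ha.2) (hrF_supp f hf0 b hb.2) hadj
  -- membership along the homotopy
  have hcomb_supp : ∀ (t : ℝ) (f : V → ℝ), (∀ x, 0 ≤ f x) → ∀ x,
      (1 - t) * iF (rF f) x + t * f x ≠ 0 → f x ≠ 0 ∨ (x = w ∧ f v ≠ 0) := by
    intro t f hf0 x hx
    by_contra hcon
    push_neg at hcon
    obtain ⟨hfx, hxw⟩ := hcon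
    have hirf : iF (rF f) x = 0 := by
      simp only [hiF]
      split
      · simp only [hrF]
        split
        · next h1 h2 => rw [← h2, hfx, hxw h2, add_zero]
        · exact hfx
      · rfl
    rw [hirf, hfx, mul_zero, mul_zero, add_zero] at hx
    exact hx rfl
  have hH_mem : ∀ (t : ℝ), 0 ≤ t → t ≤ 1 → ∀ f ∈ (indepCx G).geomSet,
      (fun x => (1 - t) * iF (rF f) x + t * f x) ∈ (indepCx G).geomSet := by
    intro t ht0 ht1 f hf
    have hfm := hf
    obtain ⟨hf0, hf1, hfs⟩ := hf
    obtain ⟨hi0, hi1, -⟩ := hiF_mem (rF f) (hrF_mem f hfm)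
    refine ⟨?_, ?_, ?_⟩
    · intro x
      exact add_nonneg (mul_nonneg (by linarith) (hi0 x)) (mul_nonneg ht0 (hf0 x))
    · rw [Finset.sum_add_distrib, ← Finset.mul_sum, ← Finset.mul_sum, hi1, hf1]
      ring
    · intro a ha b hb hadj
      simp only [suppF, Finset.mem_filter] at ha hb
      exact key_indep G v w hnbr f hfs (hcomb_supp t f hf0 a ha.2)
        (hcomb_supp t f hf0 b hb.2) hadj
  -- continuous maps between the realizations
  let rC : C((indepCx G).geom, (indepCx (G.induce S)).geom) :=
    ⟨fun f => ⟨rF f.1, hrF_mem f.1 f.2⟩, by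
      apply Continuous.subtype_mk
      apply continuous_pi
      intro u
      simp only [hrF]
      split
      · exact (((continuous_apply w).comp continuous_subtype_val).add
          ((continuous_apply v).comp continuous_subtype_val))
      · exact (continuous_apply _).comp continuous_subtype_val⟩
  let iC : C((indepCx (G.induce S)).geom, (indepCx G).geom) :=
    ⟨fun g => ⟨iF g.1, hiF_mem g.1 g.2⟩, by
      apply Continuous.subtype_mk
      apply continuous_pi
      intro x
      simp only [hiF]
      split
      · exact (continuous_apply _).comp continuous_subtype_val
      · exact continuous_const⟩
  -- the composite r ∘ i is the identity
  have hri : rC.comp iC = ContinuousMap.id _ := by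
    apply ContinuousMap.ext
    intro g
    apply Subtype.ext
    funext u
    show rF (iF g.1) u = g.1 u
    simp only [hrF, hiF]
    by_cases huw : (u : V) = w
    · rw [if_pos huw, dif_pos hwS, dif_neg (by simp [hS])]
      have : (⟨w, hwS⟩ : ↥S) = u := Subtype.ext huw.symm
      rw [this, add_zero]
    · rw [if_neg huw, dif_pos u.2]
  -- the homotopy from i ∘ r to the identity
  have hhom : (iC.comp rC).Homotopic (ContinuousMap.id _) := by
    refine ⟨⟨⟨fun p => ⟨fun x => (1 - (p.1 : ℝ)) * iF (rF p.2.1) x + (p.1 : ℝ) * p.2.1 x,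
      hH_mem p.1 p.1.2.1 p.1.2.2 p.2.1 p.2.2⟩, ?_⟩, ?_, ?_⟩⟩
    · apply Continuous.subtype_mk
      apply continuous_pi
      intro x
      have hc1 : Continuous fun p : ↥unitInterval × (indepCx G).geom => (p.1 : ℝ) :=
        continuous_subtype_val.comp continuous_fst
      have hc2 : Continuous fun p : ↥unitInterval × (indepCx G).geom => p.2.1 x :=
        (continuous_apply x).comp (continuous_subtype_val.comp continuous_snd)
      have hc3 : Continuous fun p : ↥unitInterval × (indepCx G).geom => iF (rF p.2.1) x := by
        simp only [hiF]
        split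
        · simp only [hrF]
          split
          · exact ((continuous_apply w).comp (continuous_subtype_val.comp continuous_snd)).add
              ((continuous_apply v).comp (continuous_subtype_val.comp continuous_snd))
          · exact (continuous_apply _).comp (continuous_subtype_val.comp continuous_snd)
        · exact continuous_const
      exact ((continuous_const.sub hc1).mul hc3).add (hc1.mul hc2)
    · intro f
      apply Subtype.ext
      funext x
      show (1 - (0 : ℝ)) * iF (rF f.1) x + 0 * f.1 x = iF (rF f.1) x
      ring
    · intro f
      apply Subtype.ext
      funext x
      show (1 - (1 : ℝ)) * iF (rF f.1) x + 1 * f.1 x = f.1 x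
      ring
  exact ⟨⟨rC, iC, hhom, by rw [hri]⟩⟩

end
end
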